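/- arXiv:1612.02389 — 4 statements merged into one kernel-verified Lean document; each statement's English description precedes it below -/
import Mathlib

section
/- Let ω_1, ..., ω_ℓ be i.i.d. real random variables with P[ω_1 ≥ x] ≤ C x^{-γ} for all x ≥ 1, where γ ∈ (1,2) and C > 0. For M > 0 and V(n) := e^{M²} (ℓ (log ℓ) n)^{1/(2γ)}, let A_ℓ be the event that there exist i < j in {1,...,ℓ} with min(ω_i, ω_j) ≥ V(j-i). Then P[A_ℓ] ≤ C' e^{-2γM²} for a constant C' depending only on C and γ (uniformly in ℓ ≥ 2). -/
/-!
For `i < j`, independence and the tail bound give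
`P[min(ω_i, ω_j) ≥ V] ≤ (C V^{-γ})²`, and for `V = V(j - i)` this equals
`C² e^{-2γM²} / (ℓ log ℓ (j - i))`. A union bound over the pairs, together with
`∑_{1 ≤ i < j ≤ ℓ} 1/(j - i) ≤ ℓ H_ℓ ≤ 3 ℓ log ℓ`, yields `C' = 3 C²`.
-/

open MeasureTheory ProbabilityTheory

open Finset Real

lemma sum_Ioc_inv_sub_le_harmonic (i ℓ : ℕ) :
    ∑ j ∈ Ioc i ℓ, ((j : ℝ) - i)⁻¹ ≤ harmonic ℓ := by
  have hsub : Ioc i ℓ ⊆ (Ioc 0 ℓ).image (i + ·) := by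
    rw [image_add_left_Ioc]
    intro j
    simp only [mem_Ioc]
    omega
  calc ∑ j ∈ Ioc i ℓ, ((j : ℝ) - i)⁻¹
      ≤ ∑ j ∈ (Ioc 0 ℓ).image (i + ·), ((j : ℝ) - i)⁻¹ := by
        refine sum_le_sum_of_subset_of_nonneg hsub fun j hj _ => inv_nonneg.2 (sub_nonneg.2 ?_)
        rw [image_add_left_Ioc, mem_Ioc] at hj
        exact_mod_cast hj.1.le
    _ = ∑ k ∈ Icc 1 ℓ, (k : ℝ)⁻¹ := by
        rw [sum_image fun _ _ _ _ => Nat.add_left_cancel]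
        refine sum_congr (by ext; simp only [mem_Ioc, mem_Icc]; omega) fun k _ => by simp
    _ = harmonic ℓ := by simp [harmonic_eq_sum_Icc]

lemma sum_sum_Ioc_inv_sub_le (ℓ : ℕ) :
    ∑ i ∈ Icc 1 ℓ, ∑ j ∈ Ioc i ℓ, ((j : ℝ) - i)⁻¹ ≤ ℓ * (1 + log ℓ) := by
  calc ∑ i ∈ Icc 1 ℓ, ∑ j ∈ Ioc i ℓ, ((j : ℝ) - i)⁻¹ ≤ ∑ _i ∈ Icc 1 ℓ, (harmonic ℓ : ℝ) :=
        sum_le_sum fun i _ => sum_Ioc_inv_sub_le_harmonic i ℓ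
    _ ≤ ℓ * (1 + log ℓ) := by
        rw [sum_const, Nat.card_Icc, add_tsub_cancel_right, nsmul_eq_mul]
        gcongr
        exact harmonic_le_one_add_log ℓ

lemma sum_sum_Ioc_inv_sub_le_three_mul_log {ℓ : ℕ} (hℓ : (2 : ℝ) ≤ ℓ) :
    ∑ i ∈ Icc 1 ℓ, ∑ j ∈ Ioc i ℓ, ((j : ℝ) - i)⁻¹ ≤ 3 * (ℓ * log ℓ) := by
  have hlog : 1 / 2 ≤ log ℓ := (log_le_log two_pos hℓ).trans' (by linarith [log_two_gt_d9])
  calc _ ≤ ℓ * (1 + log ℓ) := sum_sum_Ioc_inv_sub_le ℓ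
    _ ≤ ℓ * (3 * log ℓ) := by gcongr; linarith
    _ = 3 * (ℓ * log ℓ) := by ring

lemma one_le_mul_log_of_two_le {x : ℝ} (hx : 2 ≤ x) : 1 ≤ x * log x := by
  linarith [self_sub_one_le_mul_log (by linarith : (0 : ℝ) ≤ x)]

lemma measureReal_setOf_exists_pair_le {Ω : Type*} [MeasurableSpace Ω] (μ : Measure Ω)
    [IsFiniteMeasure μ] (ℓ : ℕ) (A : ℕ → ℕ → Set Ω) :
    μ.real {w | ∃ i j : ℕ, 1 ≤ i ∧ i < j ∧ j ≤ ℓ ∧ w ∈ A i j}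
      ≤ ∑ i ∈ Icc 1 ℓ, ∑ j ∈ Ioc i ℓ, μ.real (A i j) := by
  have hsub : {w | ∃ i j : ℕ, 1 ≤ i ∧ i < j ∧ j ≤ ℓ ∧ w ∈ A i j}
      ⊆ ⋃ i ∈ Icc 1 ℓ, ⋃ j ∈ Ioc i ℓ, A i j := by
    rintro w ⟨i, j, hi, hij, hj, hw⟩
    simp only [Set.mem_iUnion, mem_Icc, mem_Ioc]
    exact ⟨i, ⟨hi, hij.le.trans hj⟩, j, ⟨hij, hj⟩, hw⟩
  calc _ ≤ μ.real (⋃ i ∈ Icc 1 ℓ, ⋃ j ∈ Ioc i ℓ, A i j) :=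
        measureReal_mono hsub (measure_ne_top _ _)
    _ ≤ ∑ i ∈ Icc 1 ℓ, μ.real (⋃ j ∈ Ioc i ℓ, A i j) := measureReal_biUnion_finset_le _ _
    _ ≤ _ := sum_le_sum fun i _ => measureReal_biUnion_finset_le _ _

/-- The threshold `V(n)` of the statement, with `L = ℓ log ℓ`. -/
noncomputable def peakThreshold (γ M L n : ℝ) : ℝ := exp (M ^ 2) * (L * n) ^ (1 / (2 * γ))

lemma one_le_peakThreshold {γ L n : ℝ} (M : ℝ) (hγ : 0 < γ) (hLn : 1 ≤ L * n) :
    1 ≤ peakThreshold γ M L n :=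
  one_le_mul_of_one_le_of_one_le (one_le_exp (sq_nonneg M)) (one_le_rpow hLn (by positivity))

lemma peakThreshold_rpow_neg_sq {γ M L n : ℝ} (hγ : γ ≠ 0) (hLn : 0 ≤ L * n) :
    (peakThreshold γ M L n ^ (-γ)) ^ 2 = exp (-2 * γ * M ^ 2) * (L * n)⁻¹ := by
  rw [peakThreshold, ← rpow_natCast, ← rpow_mul (by positivity),
    mul_rpow (exp_nonneg _) (by positivity), ← exp_mul, ← rpow_mul hLn]
  have : 1 / (2 * γ) * (-γ * (2 : ℕ)) = -1 := by field_simp; norm_num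
  rw [this, rpow_neg_one]
  ring_nf

section IndependentPeaks

variable {Ω ι : Type*} [MeasurableSpace Ω] {μ : Measure Ω}
  {ω : ι → Ω → ℝ} {k : ι}

lemma measureReal_inter_preimage_Ici_le (hmeas : ∀ n, Measurable (ω n))
    (hindep : iIndepFun ω μ) (hid : ∀ n, μ.map (ω n) = μ.map (ω k)) {v t : ℝ}
    (htail : μ.real (ω k ⁻¹' Set.Ici v) ≤ t) {i j : ι} (hij : i ≠ j) :
    μ.real (ω i ⁻¹' Set.Ici v ∩ ω j ⁻¹' Set.Ici v) ≤ t ^ 2 := by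
  have htail' (n : ι) : μ.real (ω n ⁻¹' Set.Ici v) ≤ t := by
    have hn : IdentDistrib (ω n) (ω k) μ μ :=
      ⟨(hmeas n).aemeasurable, (hmeas k).aemeasurable, hid n⟩
    simpa [Measure.real, hn.measure_mem_eq measurableSet_Ici] using htail
  rw [Measure.real, (hindep.indepFun hij).measure_inter_preimage_eq_mul _ _ measurableSet_Ici
    measurableSet_Ici, ENNReal.toReal_mul, sq]
  exact mul_le_mul (htail' i) (htail' j) measureReal_nonneg (measureReal_nonneg.trans (htail' i))

lemma measureReal_peakThreshold_le_min_le (hmeas : ∀ n, Measurable (ω n))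
    (hindep : iIndepFun ω μ) (hid : ∀ n, μ.map (ω n) = μ.map (ω k)) {γ C : ℝ} (hγ : 0 < γ)
    (htail : ∀ x : ℝ, 1 ≤ x → μ.real {w | x ≤ ω k w} ≤ C * x ^ (-γ))
    (M : ℝ) {L n : ℝ} (hLn : 1 ≤ L * n) {i j : ι} (hij : i ≠ j) :
    μ.real {w | peakThreshold γ M L n ≤ min (ω i w) (ω j w)}
      ≤ C ^ 2 * exp (-2 * γ * M ^ 2) * (L * n)⁻¹ := by
  have hV := one_le_peakThreshold M hγ hLn
  have hset : {w | peakThreshold γ M L n ≤ min (ω i w) (ω j w)}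
      = ω i ⁻¹' Set.Ici (peakThreshold γ M L n) ∩ ω j ⁻¹' Set.Ici (peakThreshold γ M L n) := by
    ext w
    simp
  calc _ ≤ (C * peakThreshold γ M L n ^ (-γ)) ^ 2 :=
        hset ▸ measureReal_inter_preimage_Ici_le hmeas hindep hid (htail _ hV) hij
    _ = C ^ 2 * exp (-2 * γ * M ^ 2) * (L * n)⁻¹ := by
        rw [mul_pow, peakThreshold_rpow_neg_sq hγ.ne' (by positivity), ← mul_assoc]

end IndependentPeaks

theorem dual_peak_probability_bound_general
    {Ω : Type*} [MeasurableSpace Ω] (μ : Measure Ω) [IsProbabilityMeasure μ]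
    (ω : ℕ → Ω → ℝ) (hωmeas : ∀ n, Measurable (ω n))
    (hωindep : iIndepFun ω μ)
    (hωid : ∀ n, Measure.map (ω n) μ = Measure.map (ω 1) μ)
    (γ : ℝ) (hγ1 : 1 < γ) (C : ℝ) (hC : 0 < C)
    (htail : ∀ x : ℝ, 1 ≤ x → (μ {w | x ≤ ω 1 w}).toReal ≤ C * x ^ (-γ)) :
    ∃ C' > 0, ∀ ℓ : ℕ, 2 ≤ ℓ → ∀ M : ℝ, 0 < M →
      (μ {w | ∃ i j : ℕ, 1 ≤ i ∧ i < j ∧ j ≤ ℓ ∧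
          Real.exp (M ^ 2) *
            ((ℓ : ℝ) * Real.log ℓ * ((j : ℝ) - i)) ^ (1 / (2 * γ))
          ≤ min (ω i w) (ω j w)}).toReal
        ≤ C' * Real.exp (-2 * γ * M ^ 2) := by
  refine ⟨3 * C ^ 2, by positivity, fun ℓ hℓ M _ => ?_⟩
  have hℓ2 : (2 : ℝ) ≤ ℓ := by exact_mod_cast hℓ
  set L := (ℓ : ℝ) * log ℓ
  have hL : 1 ≤ L := one_le_mul_log_of_two_le hℓ2
  set K := C ^ 2 * exp (-2 * γ * M ^ 2)
  calc _ ≤ ∑ i ∈ Icc 1 ℓ, ∑ j ∈ Ioc i ℓ, K / L * ((j : ℝ) - i)⁻¹ := by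
        refine (measureReal_setOf_exists_pair_le μ ℓ _).trans <|
          sum_le_sum fun i _ => sum_le_sum fun j hj => ?_
        have hij := (mem_Ioc.1 hj).1
        have hd : (1 : ℝ) ≤ j - i := by rw [le_sub_iff_add_le']; exact_mod_cast hij
        calc _ ≤ K * (L * (j - i))⁻¹ :=
              measureReal_peakThreshold_le_min_le hωmeas hωindep hωid (by linarith) htail M
                (one_le_mul_of_one_le_of_one_le hL hd) hij.ne
          _ = K / L * ((j : ℝ) - i)⁻¹ := by rw [mul_inv]; ring
    _ = K / L * ∑ i ∈ Icc 1 ℓ, ∑ j ∈ Ioc i ℓ, ((j : ℝ) - i)⁻¹ := by simp_rw [mul_sum]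
    _ ≤ K / L * (3 * L) := by gcongr; exact sum_sum_Ioc_inv_sub_le_three_mul_log hℓ2
    _ = 3 * C ^ 2 * exp (-2 * γ * M ^ 2) := by
        simp only [K]
        field_simp [(zero_lt_one.trans_le hL).ne']

/-- Union bound for dual peaks: if `ω_1,…,ω_ℓ` are i.i.d. with
`P[ω ≥ x] ≤ C x^{-γ}` (`γ ∈ (1,2)`) and
`V(n) = e^{M²}(ℓ (log ℓ) n)^{1/(2γ)}`, then the probability that some pair
`i < j ≤ ℓ` satisfies `min(ω_i,ω_j) ≥ V(j-i)` is at most `C' e^{-2γM²}`,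
uniformly in `ℓ ≥ 2` and `M > 0`. -/
theorem dual_peak_probability_bound
    {Ω : Type*} [MeasurableSpace Ω] (μ : Measure Ω) [IsProbabilityMeasure μ]
    (ω : ℕ → Ω → ℝ) (hωmeas : ∀ n, Measurable (ω n))
    (hωindep : iIndepFun ω μ)
    (hωid : ∀ n, Measure.map (ω n) μ = Measure.map (ω 1) μ)
    (γ : ℝ) (hγ1 : 1 < γ) (hγ2 : γ < 2) (C : ℝ) (hC : 0 < C)
    (htail : ∀ x : ℝ, 1 ≤ x → (μ {w | x ≤ ω 1 w}).toReal ≤ C * x ^ (-γ)) :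
    ∃ C' > 0, ∀ ℓ : ℕ, 2 ≤ ℓ → ∀ M : ℝ, 0 < M →
      (μ {w | ∃ i j : ℕ, 1 ≤ i ∧ i < j ∧ j ≤ ℓ ∧
          Real.exp (M ^ 2) *
            ((ℓ : ℝ) * Real.log ℓ * ((j : ℝ) - i)) ^ (1 / (2 * γ))
          ≤ min (ω i w) (ω j w)}).toReal
        ≤ C' * Real.exp (-2 * γ * M ^ 2) :=
  dual_peak_probability_bound_general μ ω hωmeas hωindep hωid γ hγ1 C hC htail
end

section
/- Under the same renewal bounds c n^{α-1} ≤ u(n) ≤ C n^{α-1}, there is a constant C' such that for all r ≥ 2: E[Σ_{i=1}^{r} Σ_{1≤j<k≤⌈r^{α/4}⌉} j^{-α/2} k^{-α} 1_{i∈τ, i+j∈τ, i+k∈τ}] ≤ C' r^{3α/2} log r. -/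
/-!
Dropping the events `i+j ∈ τ`, `i+k ∈ τ` gives `P[i, i+j, i+k ∈ τ] ≤ u(i) ≤ C i^{α-1}`.
Summing over `i ≤ r` gives at most `C r^α / α`, and since `j, k` range only up to
`M = ⌈r^{α/4}⌉ ≤ 2 r^{α/4}`, the weights `j^{-α/2} k^{-α} ≤ 1` contribute at most
`M² ≤ 4 r^{α/2}`. Hence the expectation is `O(r^{3α/2})`, and a fortiori `O(r^{3α/2} log r)`.
-/

open MeasureTheory ProbabilityTheory Finset

lemma mul_rpow_sub_one_le_rpow_sub_rpow {β x : ℝ} (hβ0 : 0 ≤ β) (hβ1 : β ≤ 1) (hx : 1 ≤ x) :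
    β * x ^ (β - 1) ≤ x ^ β - (x - 1) ^ β := by
  have hx0 : 0 < x := by linarith
  have hs : -1 ≤ -x⁻¹ := neg_le_neg (inv_le_one_of_one_le₀ hx)
  -- Bernoulli's inequality, since `t ↦ t ^ β` is concave
  have bernoulli := rpow_one_add_le_one_add_mul_self hs hβ0 hβ1
  rw [le_sub_comm]
  calc (x - 1) ^ β = (x * (1 + -x⁻¹)) ^ β := by field_simp; ring_nf
    _ = x ^ β * (1 + -x⁻¹) ^ β := Real.mul_rpow hx0.le (by linarith)
    _ ≤ x ^ β * (1 + β * -x⁻¹) := by gcongr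
    _ = x ^ β - β * x ^ (β - 1) := by
      rw [Real.rpow_sub hx0, Real.rpow_one]; ring

lemma sum_Icc_rpow_sub_one_le {β : ℝ} (hβ0 : 0 < β) (hβ1 : β ≤ 1) (N : ℕ) :
    ∑ n ∈ Icc 1 N, (n : ℝ) ^ (β - 1) ≤ (N : ℝ) ^ β / β := by
  induction N with
  | zero => simp [Real.zero_rpow hβ0.ne']
  | succ N ih =>
    rw [sum_Icc_succ_top (Nat.le_add_left 1 N), le_div_iff₀ hβ0]
    have step := mul_rpow_sub_one_le_rpow_sub_rpow hβ0.le hβ1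
      (by simp : (1 : ℝ) ≤ ((N + 1 : ℕ) : ℝ))
    rw [le_div_iff₀ hβ0] at ih
    push_cast at step ⊢
    rw [add_sub_cancel_right] at step
    linarith

lemma sum_Icc_sum_Icc_rpow_neg_le_sq {a b : ℝ} (ha : 0 ≤ a) (hb : 0 ≤ b) (M : ℕ) :
    ∑ j ∈ Icc 1 M, ∑ k ∈ Icc (j + 1) M, (j : ℝ) ^ (-a) * (k : ℝ) ^ (-b) ≤ (M : ℝ) ^ 2 := by
  have term_le_one : ∀ j ∈ Icc 1 M, ∀ k ∈ Icc (j + 1) M, (j : ℝ) ^ (-a) * (k : ℝ) ^ (-b) ≤ 1 := by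
    intro j hj k hk
    have hj1 : (1 : ℝ) ≤ j := by exact_mod_cast (mem_Icc.mp hj).1
    have hk1 : (1 : ℝ) ≤ k := by
      exact_mod_cast (mem_Icc.mp hj).1.trans (Nat.le_of_succ_le (mem_Icc.mp hk).1)
    exact mul_le_one₀ (Real.rpow_le_one_of_one_le_of_nonpos hj1 (by linarith))
      (by positivity) (Real.rpow_le_one_of_one_le_of_nonpos hk1 (by linarith))
  calc ∑ j ∈ Icc 1 M, ∑ k ∈ Icc (j + 1) M, (j : ℝ) ^ (-a) * (k : ℝ) ^ (-b)
      ≤ ∑ _j ∈ Icc 1 M, (M : ℝ) := by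
        refine sum_le_sum fun j hj => (sum_le_card_nsmul _ _ 1 (term_le_one j hj)).trans ?_
        simp
    _ = (M : ℝ) ^ 2 := by simp [sq]

lemma natCeil_rpow_sq_le {x γ : ℝ} (hx : 1 ≤ x) (hγ : 0 ≤ γ) :
    (⌈x ^ γ⌉₊ : ℝ) ^ 2 ≤ 4 * x ^ (2 * γ) := by
  have hx0 : 0 ≤ x := by linarith
  have hceil := Nat.ceil_lt_two_mul (by linarith [Real.one_le_rpow hx hγ] : (2 : ℝ)⁻¹ < x ^ γ)
  calc (⌈x ^ γ⌉₊ : ℝ) ^ 2 ≤ (2 * x ^ γ) ^ 2 := by gcongr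
    _ = 4 * x ^ (2 * γ) := by rw [mul_pow, ← Real.rpow_mul_natCast hx0]; norm_num [mul_comm]

lemma measurableSet_exists_sum_range_eq {Ω : Type*} [MeasurableSpace Ω] {ξ : ℕ → Ω → ℕ}
    (hξ : ∀ n, Measurable (ξ n)) (n : ℕ) :
    MeasurableSet {ω | ∃ k, ∑ m ∈ range k, ξ m ω = n} := by
  simp only [Set.ofPred_exists]
  exact .iUnion fun k => (Finset.measurable_sum _ fun m _ => hξ m) (measurableSet_singleton n)

section ThreePoint

variable {Ω : Type*} {P : ℕ → Ω → Prop} {w : ℕ → ℕ → ℝ}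

lemma sum_mul_indicator_three_point_le (hw : ∀ j k, 0 ≤ w j k) (r M : ℕ) (ω : Ω) :
    ∑ i ∈ Icc 1 r, ∑ j ∈ Icc 1 M, ∑ k ∈ Icc (j + 1) M,
        w j k * {ω' | P i ω' ∧ P (i + j) ω' ∧ P (i + k) ω'}.indicator (fun _ => (1 : ℝ)) ω
      ≤ (∑ j ∈ Icc 1 M, ∑ k ∈ Icc (j + 1) M, w j k) *
          ∑ i ∈ Icc 1 r, {ω' | P i ω'}.indicator 1 ω := by
  calc _ ≤ ∑ i ∈ Icc 1 r, ∑ j ∈ Icc 1 M, ∑ k ∈ Icc (j + 1) M,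
        w j k * {ω' | P i ω'}.indicator 1 ω := by
        gcongr with i _ j _ k _
        · exact hw j k
        · exact Set.indicator_le_indicator_of_subset (fun _ h => h.1) (fun _ => zero_le_one) ω
    _ = _ := by simp only [mul_sum, sum_mul]

variable [MeasurableSpace Ω]

lemma integral_sum_mul_indicator_three_point_le (μ : Measure Ω) [IsFiniteMeasure μ]
    (hP : ∀ n, MeasurableSet {ω | P n ω}) (hw : ∀ j k, 0 ≤ w j k) (r M : ℕ) :
    ∫ ω, (∑ i ∈ Icc 1 r, ∑ j ∈ Icc 1 M, ∑ k ∈ Icc (j + 1) M,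
        w j k * {ω' | P i ω' ∧ P (i + j) ω' ∧ P (i + k) ω'}.indicator (fun _ => (1 : ℝ)) ω) ∂μ
      ≤ (∑ j ∈ Icc 1 M, ∑ k ∈ Icc (j + 1) M, w j k) * ∑ i ∈ Icc 1 r, μ.real {ω | P i ω} := by
  have hint : ∀ i ∈ Icc 1 r, Integrable ({ω' | P i ω'}.indicator (1 : Ω → ℝ)) μ :=
    fun i _ => (integrable_const 1).indicator (hP i)
  calc _ ≤ ∫ ω, (∑ j ∈ Icc 1 M, ∑ k ∈ Icc (j + 1) M, w j k) *
          ∑ i ∈ Icc 1 r, {ω' | P i ω'}.indicator 1 ω ∂μ := by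
        refine integral_mono_of_nonneg (.of_forall fun ω => ?_)
          ((integrable_finsetSum _ hint).const_mul _)
          (.of_forall (sum_mul_indicator_three_point_le hw r M))
        exact sum_nonneg fun i _ => sum_nonneg fun j _ => sum_nonneg fun k _ =>
          mul_nonneg (hw j k) (Set.indicator_nonneg (fun _ _ => zero_le_one) ω)
    _ = _ := by
      rw [integral_const_mul, integral_finsetSum _ hint]
      simp only [integral_indicator_one (hP _)]

end ThreePoint

theorem renewal_three_point_sum_bound_general
    {Ω : Type*} [MeasurableSpace Ω] (μ : Measure Ω) [IsProbabilityMeasure μ]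
    (ξ : ℕ → Ω → ℕ) (hξmeas : ∀ n, Measurable (ξ n))
    (inτ : ℕ → Ω → Prop)
    (hinτ : ∀ n w, inτ n w ↔ ∃ k : ℕ, (∑ m ∈ Finset.range k, ξ m w) = n)
    (u : ℕ → ℝ) (hu : ∀ n, u n = (μ {w | inτ n w}).toReal)
    (α : ℝ) (hα0 : 0 < α) (hα1 : α < 1) (C : ℝ)
    (hup : ∀ n : ℕ, 1 ≤ n → u n ≤ C * (n : ℝ) ^ (α - 1)) :
    ∃ C' > 0, ∀ r : ℕ, 2 ≤ r →
      ∫ w, (∑ i ∈ Finset.Icc 1 r, ∑ j ∈ Finset.Icc 1 ⌈(r : ℝ) ^ (α / 4)⌉₊,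
          ∑ k ∈ Finset.Icc (j + 1) ⌈(r : ℝ) ^ (α / 4)⌉₊,
            (j : ℝ) ^ (-(α / 2)) * (k : ℝ) ^ (-α) *
              Set.indicator {w' | inτ i w' ∧ inτ (i + j) w' ∧ inτ (i + k) w'}
                (fun _ => (1:ℝ)) w) ∂μ
        ≤ C' * (r : ℝ) ^ (3 * α / 2) * Real.log r := by
  have hC : 0 ≤ C := ENNReal.toReal_nonneg.trans (by simpa [hu] using hup 1 le_rfl)
  have hτ : ∀ n, MeasurableSet {w | inτ n w} := fun n => by
    simpa only [hinτ] using measurableSet_exists_sum_range_eq hξmeas n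
  have hlog2 : 0 < Real.log 2 := Real.log_pos one_lt_two
  refine ⟨(4 * C / α + 1) / Real.log 2, by positivity, fun r hr => ?_⟩
  have hr1 : (1 : ℝ) ≤ r := by exact_mod_cast one_le_two.trans hr
  have hweights := (sum_Icc_sum_Icc_rpow_neg_le_sq (a := α / 2) (by positivity) hα0.le _).trans
    (natCeil_rpow_sq_le hr1 (by positivity : 0 ≤ α / 4))
  have hrenewals : ∑ i ∈ Icc 1 r, μ.real {w | inτ i w} ≤ C * ((r : ℝ) ^ α / α) :=
    calc _ ≤ ∑ i ∈ Icc 1 r, C * (i : ℝ) ^ (α - 1) :=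
          sum_le_sum fun i hi => by rw [measureReal_def, ← hu]; exact hup i (mem_Icc.mp hi).1
      _ ≤ _ := (mul_sum ..).symm.trans_le (by gcongr; exact sum_Icc_rpow_sub_one_le hα0 hα1.le r)
  have hlog : 4 * C / α ≤ (4 * C / α + 1) / Real.log 2 * Real.log r :=
    calc 4 * C / α ≤ (4 * C / α + 1) / Real.log 2 * Real.log 2 := by
          rw [div_mul_cancel₀ _ hlog2.ne']; linarith
      _ ≤ _ := by gcongr; exact_mod_cast hr
  calc _ ≤ _ := integral_sum_mul_indicator_three_point_le μ hτ (fun j k => by positivity) r _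
    _ ≤ 4 * (r : ℝ) ^ (2 * (α / 4)) * (C * ((r : ℝ) ^ α / α)) := by gcongr
    _ = 4 * C / α * (r : ℝ) ^ (3 * α / 2) := by
      rw [show 3 * α / 2 = 2 * (α / 4) + α by ring, Real.rpow_add (by positivity)]; ring
    _ ≤ _ := by rw [mul_right_comm]; gcongr

/-- Three-point sum estimate for a renewal process with `c n^{α-1} ≤ u(n) ≤ C n^{α-1}`:
`E[Σ_{i=1}^r Σ_{1≤j<k≤⌈r^{α/4}⌉} j^{-α/2} k^{-α} 1_{i∈τ, i+j∈τ, i+k∈τ}] ≤ C' r^{3α/2} log r`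
for `r ≥ 2`. -/
theorem renewal_three_point_sum_bound
    {Ω : Type*} [MeasurableSpace Ω] (μ : Measure Ω) [IsProbabilityMeasure μ]
    (ξ : ℕ → Ω → ℕ) (hξmeas : ∀ n, Measurable (ξ n))
    (hξindep : iIndepFun ξ μ)
    (hξid : ∀ n, Measure.map (ξ n) μ = Measure.map (ξ 0) μ)
    (hξpos : ∀ n w, 1 ≤ ξ n w)
    (inτ : ℕ → Ω → Prop)
    (hinτ : ∀ n w, inτ n w ↔ ∃ k : ℕ, (∑ m ∈ Finset.range k, ξ m w) = n)
    (u : ℕ → ℝ) (hu : ∀ n, u n = (μ {w | inτ n w}).toReal)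
    (α : ℝ) (hα0 : 0 < α) (hα1 : α < 1) (c C : ℝ) (hc : 0 < c) (hcC : c ≤ C)
    (hlow : ∀ n : ℕ, 1 ≤ n → c * (n : ℝ) ^ (α - 1) ≤ u n)
    (hup : ∀ n : ℕ, 1 ≤ n → u n ≤ C * (n : ℝ) ^ (α - 1)) :
    ∃ C' > 0, ∀ r : ℕ, 2 ≤ r →
      ∫ w, (∑ i ∈ Finset.Icc 1 r, ∑ j ∈ Finset.Icc 1 ⌈(r : ℝ) ^ (α / 4)⌉₊,
          ∑ k ∈ Finset.Icc (j + 1) ⌈(r : ℝ) ^ (α / 4)⌉₊,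
            (j : ℝ) ^ (-(α / 2)) * (k : ℝ) ^ (-α) *
              Set.indicator {w' | inτ i w' ∧ inτ (i + j) w' ∧ inτ (i + k) w'}
                (fun _ => (1:ℝ)) w) ∂μ
        ≤ C' * (r : ℝ) ^ (3 * α / 2) * Real.log r :=
  renewal_three_point_sum_bound_general μ ξ hξmeas inτ hinτ u hu α hα0 hα1 C hup
end

section
/- Let τ be a renewal process with u(n) = P[n∈τ], and for i ≥ 1 define U_i := 1_{i∈τ} · Σ_{j=1}^{m} j^{-α} (1_{i+j∈τ} - u(j)) where m = ⌈r^{α/4}⌉ and α ∈ (0,1). If i_2 - i_1 ≥ m then E[U_{i_1} U_{i_2}] = 0. -/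
open MeasureTheory ProbabilityTheory Finset Set

/-!
Write `1_{i₂ ∈ τ} = ∑_k 1_{S_k = i₂}`, where `S_k = ξ₀ + ⋯ + ξ_{k-1}`. Because `i₁ + m ≤ i₂`,
on `{S_k = i₂}` the variable `U_{i₁}` only sees `τ ∩ [0, i₂]`, which is determined by
`ξ₀, …, ξ_{k-1}`, whereas `i₂ + j ∈ τ` becomes `j ∈ τ'` for the renewal set `τ'` of the shifted
increments `ξ_k, ξ_{k+1}, …`. The two families of increments are independent and `τ'` has the
law of `τ`, so `∑_j j^{-α} (1_{j ∈ τ'} - u(j))` is centred and independent of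
`U_{i₁} 1_{S_k = i₂}`; every summand of `E[U_{i₁} U_{i₂}]` vanishes.
-/

def renewalSet (x : ℕ → ℕ) : Set ℕ := Set.range fun k => ∑ t ∈ range k, x t

/-- The paper's `U_i` is `renewalFluctuation (· ^ (-α)) u (Icc 1 m) i` applied to the increments. -/
noncomputable def renewalFluctuation (c u : ℕ → ℝ) (J : Finset ℕ) (i : ℕ) (x : ℕ → ℕ) : ℝ :=
  (renewalSet x).indicator 1 i * ∑ j ∈ J, c j * ((renewalSet x).indicator 1 (i + j) - u j)

section Combinatorics

variable {x y : ℕ → ℕ} {a j k n : ℕ}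

theorem strictMono_sum_range_of_pos (hx : ∀ t, 0 < x t) :
    StrictMono fun k => ∑ t ∈ range k, x t :=
  strictMono_nat_of_lt_succ fun k => by simpa [sum_range_succ] using hx k

theorem mem_renewalSet_iff_of_le (hx : ∀ t, 0 < x t) (hk : ∑ t ∈ range k, x t = a)
    (hn : n ≤ a) : n ∈ renewalSet x ↔ ∃ l ≤ k, ∑ t ∈ range l, x t = n := by
  refine ⟨fun ⟨l, hl⟩ => ⟨l, ?_, hl⟩, fun ⟨l, _, hl⟩ => ⟨l, hl⟩⟩
  exact (strictMono_sum_range_of_pos hx).le_iff_le.mp (by simp only [hl, hk, hn])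

theorem mem_renewalSet_congr (hx : ∀ t, 0 < x t) (hy : ∀ t, 0 < y t)
    (hxy : ∀ t < k, x t = y t) (hk : ∑ t ∈ range k, x t = a) (hn : n ≤ a) :
    n ∈ renewalSet x ↔ n ∈ renewalSet y := by
  have hsum : ∀ l ≤ k, ∑ t ∈ range l, x t = ∑ t ∈ range l, y t := fun l hl =>
    sum_congr rfl fun t ht => hxy t (lt_of_lt_of_le (mem_range.mp ht) hl)
  rw [mem_renewalSet_iff_of_le hx hk hn, mem_renewalSet_iff_of_le hy (hsum k le_rfl ▸ hk) hn]
  exact exists_congr fun l => and_congr_right fun hl => by rw [hsum l hl]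

theorem add_mem_renewalSet_iff (hx : ∀ t, 0 < x t) (hk : ∑ t ∈ range k, x t = a) :
    a + j ∈ renewalSet x ↔ j ∈ renewalSet fun n => x (k + n) := by
  constructor
  · rintro ⟨l, hl⟩
    have hkl : k ≤ l :=
      (strictMono_sum_range_of_pos hx).le_iff_le.mp (by simp only [hl, hk]; omega)
    obtain ⟨l, rfl⟩ := Nat.exists_eq_add_of_le hkl
    refine ⟨l, ?_⟩
    simp only [sum_range_add, hk] at hl ⊢
    omega
  · rintro ⟨l, hl⟩
    exact ⟨k + l, by simp only [sum_range_add, hk, hl]⟩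

theorem indicator_renewalSet_eq_sum {M : Type*} [AddCommMonoidWithOne M] (hx : ∀ t, 0 < x t)
    (a : ℕ) :
    (renewalSet x).indicator 1 a =
      ∑ k ∈ range (a + 1), if ∑ t ∈ range k, x t = a then (1 : M) else 0 := by
  by_cases ha : a ∈ renewalSet x
  · obtain ⟨k, hk⟩ := id ha
    have hka : k ∈ range (a + 1) :=
      mem_range.mpr (Nat.lt_succ_of_le (hk ▸ (strictMono_sum_range_of_pos hx).id_le k))
    rw [sum_eq_single_of_mem k hka fun l _ hlk => if_neg fun hl =>
      hlk ((strictMono_sum_range_of_pos hx).injective (hl.trans hk.symm)), if_pos hk,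
      indicator_of_mem ha, Pi.one_apply]
  · rw [indicator_of_notMem ha]
    exact (sum_eq_zero fun k _ => if_neg fun hk => ha ⟨k, hk⟩).symm

theorem renewalFluctuation_eq_sum (hx : ∀ t, 0 < x t) (c u : ℕ → ℝ) (J : Finset ℕ) (a : ℕ) :
    renewalFluctuation c u J a x = ∑ k ∈ range (a + 1),
      (if ∑ t ∈ range k, x t = a then 1 else 0) *
        ∑ j ∈ J, c j * ((renewalSet fun n => x (k + n)).indicator 1 j - u j) := by
  rw [renewalFluctuation, indicator_renewalSet_eq_sum hx, sum_mul]
  refine sum_congr rfl fun k _ => ?_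
  by_cases hk : ∑ t ∈ range k, x t = a
  · simp only [hk, if_true, one_mul]
    refine sum_congr rfl fun j _ => ?_
    rw [Set.indicator_eq_indicator (g := 1) (add_mem_renewalSet_iff hx hk) rfl]
  · simp only [hk, if_false, zero_mul]

theorem renewalFluctuation_congr {c u : ℕ → ℝ} {J : Finset ℕ} {i : ℕ} (hi : i ≤ a)
    (hJ : ∀ j ∈ J, i + j ≤ a) (h : ∀ n ≤ a, n ∈ renewalSet x ↔ n ∈ renewalSet y) :
    renewalFluctuation c u J i x = renewalFluctuation c u J i y := by
  have hind : ∀ n ≤ a, (renewalSet x).indicator (1 : ℕ → ℝ) n = (renewalSet y).indicator 1 n :=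
    fun n hn => Set.indicator_eq_indicator (h n hn) rfl
  simp only [renewalFluctuation, hind i hi]
  exact congrArg _ (sum_congr rfl fun j hj => by rw [hind (i + j) (hJ j hj)])

theorem measurableSet_mem_renewalSet (n : ℕ) :
    MeasurableSet {x : ℕ → ℕ | n ∈ renewalSet x} := by
  simp only [renewalSet, Set.mem_range, Set.ofPred_exists]
  exact MeasurableSet.iUnion fun k => measurableSet_eq_fun (by fun_prop) measurable_const

theorem measurable_renewalFluctuation (c u : ℕ → ℝ) (J : Finset ℕ) (i : ℕ) :
    Measurable (renewalFluctuation c u J i) :=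
  (measurable_const.indicator (measurableSet_mem_renewalSet i)).mul <|
    Finset.measurable_sum _ fun j _ => ((measurable_const.indicator
      (measurableSet_mem_renewalSet (i + j))).sub measurable_const).const_mul _

end Combinatorics

section Independence

theorem measurable_iSup_comap_of_mem {Ω β ι : Type*} [mβ : MeasurableSpace β]
    {ξ : ι → Ω → β} {S : Set ι} {i : ι} (hi : i ∈ S) :
    Measurable[⨆ i ∈ S, mβ.comap (ξ i)] (ξ i) :=
  (comap_measurable (ξ i)).mono (le_iSup₂ (f := fun i (_ : i ∈ S) => mβ.comap (ξ i)) i hi) le_rfl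

theorem measurable_iSup_ge_shift {Ω β : Type*} [mβ : MeasurableSpace β] (ξ : ℕ → Ω → β)
    (k : ℕ) : Measurable[⨆ t ∈ Ici k, mβ.comap (ξ t)] fun w n => ξ (k + n) w :=
  @measurable_pi_lambda _ _ _ (⨆ t ∈ Ici k, mβ.comap (ξ t)) _ _
    fun n => measurable_iSup_comap_of_mem (mem_Ici.mpr (k.le_add_right n))

variable {Ω β : Type*} [MeasurableSpace Ω] [mβ : MeasurableSpace β] {μ : Measure Ω}

theorem ProbabilityTheory.iIndepFun.indepFun_of_measurable_iSup {ι γ δ : Type*}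
    [MeasurableSpace γ] [MeasurableSpace δ] {ξ : ι → Ω → β} (hξmeas : ∀ i, Measurable (ξ i))
    (hξ : iIndepFun ξ μ) {S T : Set ι} (hST : Disjoint S T) {X : Ω → γ} {Y : Ω → δ}
    (hX : Measurable[⨆ i ∈ S, mβ.comap (ξ i)] X) (hY : Measurable[⨆ i ∈ T, mβ.comap (ξ i)] Y) :
    IndepFun X Y μ := by
  rw [IndepFun_iff_Indep]
  exact indep_of_indep_of_le (indep_iSup_of_disjoint (fun i => (hξmeas i).comap_le)
    ((iIndepFun_iff_iIndep _ _ _).1 hξ) hST) hX.comap_le hY.comap_le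

theorem ProbabilityTheory.iIndepFun.map_shift_eq {ξ : ℕ → Ω → β}
    (hξmeas : ∀ n, Measurable (ξ n)) (hξ : iIndepFun ξ μ)
    (hid : ∀ n, μ.map (ξ n) = μ.map (ξ 0)) (k : ℕ) :
    μ.map (fun w n => ξ (k + n) w) = μ.map (fun w n => ξ n w) := by
  rw [(hξ.precomp (add_right_injective k)).map_fun_eq_infinitePi_map fun n => hξmeas _,
    hξ.map_fun_eq_infinitePi_map hξmeas]
  simp_rw [hid]

end Independence

section Renewal

variable {Ω : Type*} {ξ : ℕ → Ω → ℕ}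

theorem measurable_iSup_lt_mul_ite_sum_range_eq (hξpos : ∀ n w, 0 < ξ n w)
    {G : (ℕ → ℕ) → ℝ} (hG : Measurable G) {a : ℕ}
    (hGloc : ∀ x y, (∀ n ≤ a, n ∈ renewalSet x ↔ n ∈ renewalSet y) → G x = G y) (k : ℕ) :
    Measurable[⨆ t ∈ Set.Iio k, MeasurableSpace.comap (ξ t) inferInstance]
      fun w => G (ξ · w) * if ∑ t ∈ range k, ξ t w = a then (1 : ℝ) else 0 := by
  -- Resetting the increments from `k` on to `1` changes neither factor, by `hGloc` and
  -- `mem_renewalSet_congr`, and leaves a function of `ξ₀, …, ξ_{k-1}` only.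
  set trunc : Ω → ℕ → ℕ := fun w n => if n < k then ξ n w else 1
  have htrunc : Measurable[⨆ t ∈ Set.Iio k, MeasurableSpace.comap (ξ t) inferInstance] trunc :=
    @measurable_pi_lambda _ _ _ (⨆ t ∈ Set.Iio k, MeasurableSpace.comap (ξ t) inferInstance) _ _
      fun n => by
        by_cases hn : n < k
        · simpa only [trunc, hn, if_true] using
            measurable_iSup_comap_of_mem (ξ := ξ) (Set.mem_Iio.mpr hn)
        · simpa only [trunc, hn, if_false] using measurable_const
  have htrunc_pos : ∀ w t, 0 < trunc w t := fun w t => by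
    simp only [trunc]
    split_ifs
    exacts [hξpos t w, one_pos]
  have hsum : ∀ w, ∑ t ∈ range k, trunc w t = ∑ t ∈ range k, ξ t w :=
    fun w => sum_congr rfl fun t ht => if_pos (mem_range.mp ht)
  have hF : Measurable fun y : ℕ → ℕ => G y * if ∑ t ∈ range k, y t = a then (1 : ℝ) else 0 :=
    hG.mul (Measurable.ite (measurableSet_eq_fun (by fun_prop) measurable_const)
      measurable_const measurable_const)
  convert hF.comp htrunc using 1
  funext w
  simp only [Function.comp_apply, hsum]
  split_ifs with hk
  · exact congrArg (· * 1) (hGloc _ _ fun n hn =>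
      mem_renewalSet_congr (hξpos · w) (htrunc_pos w) (fun t ht => (if_pos ht).symm) hk hn)
  · simp only [mul_zero]

variable [MeasurableSpace Ω] {μ : Measure Ω}

theorem integrable_renewalFluctuation [IsFiniteMeasure μ] (hξmeas : ∀ n, Measurable (ξ n))
    (c u : ℕ → ℝ) (J : Finset ℕ) (i : ℕ) :
    Integrable (fun w => renewalFluctuation c u J i (ξ · w)) μ := by
  have hmeas : ∀ n, MeasurableSet {w | n ∈ renewalSet (ξ · w)} :=
    fun n => measurable_pi_lambda _ hξmeas (measurableSet_mem_renewalSet n)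
  refine Integrable.bdd_mul (c := 1) (integrable_finsetSum _ fun j _ =>
    (((integrable_const 1).indicator (hmeas (i + j))).sub (integrable_const _)).const_mul _)
    (measurable_const.indicator (hmeas i)).aestronglyMeasurable (ae_of_all _ fun w => ?_)
  exact (norm_indicator_le_norm_self _ _).trans (by simp)

theorem integral_renewal_shift_fluctuation_eq_zero [IsProbabilityMeasure μ]
    (hξmeas : ∀ n, Measurable (ξ n)) (hξ : iIndepFun ξ μ)
    (hid : ∀ n, μ.map (ξ n) = μ.map (ξ 0)) (k : ℕ) (c : ℕ → ℝ) (J : Finset ℕ) :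
    ∫ w, ∑ j ∈ J, c j * ({w | j ∈ renewalSet fun n => ξ (k + n) w}.indicator 1 w
      - μ.real {w | j ∈ renewalSet (ξ · w)}) ∂μ = 0 := by
  have hshift : Measurable fun w n => ξ (k + n) w := measurable_pi_lambda _ fun n => hξmeas _
  have hlaw : ∀ j, μ.real {w | j ∈ renewalSet fun n => ξ (k + n) w}
      = μ.real {w | j ∈ renewalSet (ξ · w)} := fun j => by
    have h := congrArg (·.real {x | j ∈ renewalSet x}) (hξ.map_shift_eq hξmeas hid k)
    rwa [map_measureReal_apply hshift (measurableSet_mem_renewalSet j),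
      map_measureReal_apply (measurable_pi_lambda _ hξmeas) (measurableSet_mem_renewalSet j)] at h
  have hmeas : ∀ j, MeasurableSet {w | j ∈ renewalSet fun n => ξ (k + n) w} :=
    fun j => hshift (measurableSet_mem_renewalSet j)
  have hint : ∀ j, Integrable ({w | j ∈ renewalSet fun n => ξ (k + n) w}.indicator (1 : Ω → ℝ)) μ :=
    fun j => (integrable_const 1).indicator (hmeas j)
  rw [integral_finsetSum _ fun j _ => ?_]
  · refine sum_eq_zero fun j _ => ?_
    rw [integral_const_mul, integral_sub (hint j) (integrable_const _),
      integral_indicator_one (hmeas j), hlaw, integral_const]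
    simp
  · exact ((hint j).sub (integrable_const _)).const_mul _

theorem integral_mul_renewalFluctuation_eq_zero [IsProbabilityMeasure μ]
    (hξmeas : ∀ n, Measurable (ξ n)) (hξ : iIndepFun ξ μ)
    (hid : ∀ n, μ.map (ξ n) = μ.map (ξ 0)) (hξpos : ∀ n w, 0 < ξ n w)
    {G : (ℕ → ℕ) → ℝ} (hG : Measurable G) (hGint : Integrable (fun w => G (ξ · w)) μ) {a : ℕ}
    (hGloc : ∀ x y, (∀ n ≤ a, n ∈ renewalSet x ↔ n ∈ renewalSet y) → G x = G y)
    (c : ℕ → ℝ) (J : Finset ℕ) :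
    ∫ w, G (ξ · w) * renewalFluctuation c (fun j => μ.real {w | j ∈ renewalSet (ξ · w)}) J a
      (ξ · w) ∂μ = 0 := by
  set X : ℕ → Ω → ℝ := fun k w => G (ξ · w) * if ∑ t ∈ range k, ξ t w = a then 1 else 0
  set Z : ℕ → Ω → ℝ := fun k w => ∑ j ∈ J, c j *
    ({w | j ∈ renewalSet fun n => ξ (k + n) w}.indicator 1 w - μ.real {w | j ∈ renewalSet (ξ · w)})
  have hindep : ∀ k, IndepFun (X k) (Z k) μ := fun k => by
    have hF : Measurable fun x : ℕ → ℕ => ∑ j ∈ J, c j *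
        ({x | j ∈ renewalSet x}.indicator 1 x - μ.real {w | j ∈ renewalSet (ξ · w)}) :=
      Finset.measurable_sum _ fun j _ => ((measurable_const.indicator
        (measurableSet_mem_renewalSet j)).sub measurable_const).const_mul _
    exact hξ.indepFun_of_measurable_iSup hξmeas (Iio_disjoint_Ici le_rfl)
      (measurable_iSup_lt_mul_ite_sum_range_eq hξpos hG hGloc k) (hF.comp (measurable_iSup_ge_shift ξ k))
  have hXint : ∀ k, Integrable (X k) μ := fun k => by
    refine (hGint.indicator (s := {w | ∑ t ∈ range k, ξ t w = a})
      (measurableSet_eq_fun (Finset.measurable_sum _ fun t _ => hξmeas t) measurable_const)).congr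
      (ae_of_all _ fun w => ?_)
    by_cases hk : ∑ t ∈ range k, ξ t w = a <;> simp [X, hk]
  have hZint : ∀ k, Integrable (Z k) μ := fun k =>
    integrable_finsetSum _ fun j _ => (((integrable_const 1).indicator
      ((measurable_pi_lambda _ fun n => hξmeas _) (measurableSet_mem_renewalSet j))).sub
        (integrable_const _)).const_mul _
  have hdecomp : ∀ w, G (ξ · w) * renewalFluctuation c
      (fun j => μ.real {w | j ∈ renewalSet (ξ · w)}) J a (ξ · w)
        = ∑ k ∈ range (a + 1), X k w * Z k w := fun w => by
    rw [renewalFluctuation_eq_sum (hξpos · w), mul_sum]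
    exact sum_congr rfl fun k _ => (mul_assoc _ _ _).symm
  have hXZint : ∀ k, Integrable (fun w => X k w * Z k w) μ :=
    fun k => (hindep k).integrable_mul (hXint k) (hZint k)
  rw [integral_congr_ae (ae_of_all _ hdecomp), integral_finsetSum _ fun k _ => hXZint k]
  refine sum_eq_zero fun k _ => ?_
  rw [(hindep k).integral_fun_mul_eq_mul_integral (hXint k).aestronglyMeasurable
    (hZint k).aestronglyMeasurable, integral_renewal_shift_fluctuation_eq_zero hξmeas hξ hid k c J,
    mul_zero]

end Renewal

theorem renewal_fluctuation_decorrelation_general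
    {Ω : Type*} [MeasurableSpace Ω] (μ : Measure Ω) [IsProbabilityMeasure μ]
    (ξ : ℕ → Ω → ℕ) (hξmeas : ∀ n, Measurable (ξ n))
    (hξindep : iIndepFun ξ μ)
    (hξid : ∀ n, Measure.map (ξ n) μ = Measure.map (ξ 0) μ)
    (hξpos : ∀ n w, 1 ≤ ξ n w)
    (inτ : ℕ → Ω → Prop)
    (hinτ : ∀ n w, inτ n w ↔ ∃ k : ℕ, (∑ m' ∈ Finset.range k, ξ m' w) = n)
    (u : ℕ → ℝ) (hu : ∀ n, u n = (μ {w | inτ n w}).toReal)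
    (α : ℝ) (m : ℕ)
    (U : ℕ → Ω → ℝ)
    (hU : ∀ i w, U i w =
      Set.indicator {w' | inτ i w'} (fun _ => (1:ℝ)) w *
        ∑ j ∈ Finset.Icc 1 m, (j : ℝ) ^ (-α) *
          (Set.indicator {w' | inτ (i + j) w'} (fun _ => (1:ℝ)) w - u j))
    (i₁ i₂ : ℕ) (hle : i₁ ≤ i₂) (hgap : m ≤ i₂ - i₁) :
    ∫ w, U i₁ w * U i₂ w ∂μ = 0 := by
  have hτ : ∀ n, {w | inτ n w} = {w | n ∈ renewalSet (ξ · w)} := fun n => Set.ext (hinτ n)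
  have hu' : u = fun n => μ.real {w | n ∈ renewalSet (ξ · w)} :=
    funext fun n => by rw [hu, hτ, measureReal_def]
  have hUF : ∀ i w, U i w = renewalFluctuation (fun j => (j : ℝ) ^ (-α)) u (Icc 1 m) i (ξ · w) :=
    fun i w => by simp only [hU, hτ]; rfl
  simp only [hUF]
  subst hu'
  exact integral_mul_renewalFluctuation_eq_zero hξmeas hξindep hξid hξpos
    (measurable_renewalFluctuation _ _ _ i₁) (integrable_renewalFluctuation hξmeas _ _ _ i₁)
    (fun x y h => renewalFluctuation_congr hle (fun j hj => by grind) h) _ _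

/-- Decorrelation of the renewal fluctuations
`U_i = 1_{i∈τ} Σ_{j=1}^m j^{-α}(1_{i+j∈τ} - u(j))` with `m = ⌈r^{α/4}⌉`:
if `i₂ - i₁ ≥ m` then `E[U_{i₁} U_{i₂}] = 0`. -/
theorem renewal_fluctuation_decorrelation
    {Ω : Type*} [MeasurableSpace Ω] (μ : Measure Ω) [IsProbabilityMeasure μ]
    (ξ : ℕ → Ω → ℕ) (hξmeas : ∀ n, Measurable (ξ n))
    (hξindep : iIndepFun ξ μ)
    (hξid : ∀ n, Measure.map (ξ n) μ = Measure.map (ξ 0) μ)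
    (hξpos : ∀ n w, 1 ≤ ξ n w)
    (inτ : ℕ → Ω → Prop)
    (hinτ : ∀ n w, inτ n w ↔ ∃ k : ℕ, (∑ m' ∈ Finset.range k, ξ m' w) = n)
    (u : ℕ → ℝ) (hu : ∀ n, u n = (μ {w | inτ n w}).toReal)
    (α : ℝ) (hα0 : 0 < α) (hα1 : α < 1)
    (r : ℕ) (hr : 2 ≤ r) (m : ℕ) (hm : m = ⌈(r : ℝ) ^ (α / 4)⌉₊)
    (U : ℕ → Ω → ℝ)
    (hU : ∀ i w, U i w =
      Set.indicator {w' | inτ i w'} (fun _ => (1:ℝ)) w *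
        ∑ j ∈ Finset.Icc 1 m, (j : ℝ) ^ (-α) *
          (Set.indicator {w' | inτ (i + j) w'} (fun _ => (1:ℝ)) w - u j))
    (i₁ i₂ : ℕ) (hi₁ : 1 ≤ i₁) (hle : i₁ ≤ i₂) (hgap : m ≤ i₂ - i₁) :
    ∫ w, U i₁ w * U i₂ w ∂μ = 0 :=
  renewal_fluctuation_decorrelation_general μ ξ hξmeas hξindep hξid hξpos inτ hinτ u hu α m U hU i₁
    i₂ hle hgap
end

section
/- Let τ be a renewal process with inter-arrival distribution K(n) ~ C_K n^{-(1+α)}, α ∈ (0,1), and renewal mass u(n) = P[n∈τ] satisfying u(n) ~ (α sin(πα))/(π C_K) · n^{α-1}. Then there exists a constant C such that for all N ≥ 2 and every bounded non-negative functional F measurable with respect to σ(τ ∩ [0, ⌊N/2⌋]), E[F(τ) | N ∈ τ] ≤ C E[F(τ)]. -/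
/-!
Write `M = ⌊N/2⌋` and split `Ω` according to the list `l` of jumps up to the last renewal in
`[0, M]`; a functional of `τ ∩ [0, M]` is constant on each such event. With `s = Σ l`,
`P(l) = K(l) P(ξ > M - s)` and `P(l, N ∈ τ) ≤ K(l) Σ_{M - s < m ≤ N - s} K(m) u(N - s - m)`,
where `K(l)` is the product of the jump probabilities, so it suffices to bound this convolution
by `C u(N) P(ξ > M - s)`. Split it at the midpoint of the range of `m`. Where `N - s - m ≥ N/4`,
`u(N - s - m) ≲ N^{α-1} ≲ u(N)` and the remaining sum of `K(m)` is at most the tail. Where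
`m ≥ N/4`, `K(m) ≲ N^{-1-α}` and `Σ_{j ≤ N} u(j) ≲ N^α`, which gives
`N^{-1} ≲ u(N) P(ξ > N/2) ≤ u(N) P(ξ > M - s)`. The finitely many `N` below the range where the
asymptotics apply are handled by the trivial bound `1 / u(N)`.
-/

open MeasureTheory ProbabilityTheory Finset Filter

namespace RenewalBridge

section Asymptotics

variable {α : ℝ}

theorem rpow_le_mul_rpow_of_le_mul {x y c p : ℝ} (hp : p ≤ 0) (hy : 0 < y) (hc : 0 < c)
    (h : y ≤ c * x) : x ^ p ≤ c ^ (-p) * y ^ p := by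
  have hyx : y / c ≤ x := by rwa [div_le_iff₀' hc]
  calc x ^ p ≤ (y / c) ^ p := Real.rpow_le_rpow_of_nonpos (by positivity) hyx hp
    _ = c ^ (-p) * y ^ p := by
      rw [Real.div_rpow hy.le hc.le, Real.rpow_neg hc.le, div_eq_inv_mul]

theorem mul_rpow_mul_rpow_neg (a : ℝ) {x : ℝ} (hx : 0 < x) (p : ℝ) :
    a * x ^ p * x ^ (-p) = a := by
  rw [Real.rpow_neg hx.le, mul_inv_cancel_right₀ (Real.rpow_pos_of_pos hx p).ne']

theorem exists_le_mul_rpow_of_tendsto {f : ℕ → ℝ} {p c : ℝ}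
    (h : Tendsto (fun n : ℕ => f n * (n : ℝ) ^ p) atTop (nhds c)) :
    ∃ C, 0 < C ∧ ∀ n : ℕ, 1 ≤ n → f n ≤ C * (n : ℝ) ^ (-p) := by
  obtain ⟨C, hC⟩ := h.bddAbove_range
  refine ⟨max C 1, by positivity, fun n hn => ?_⟩
  have hn : (0 : ℝ) < n := by exact_mod_cast hn
  rw [← mul_rpow_mul_rpow_neg (f n) hn p]
  gcongr
  exact (hC ⟨n, rfl⟩).trans (le_max_left C 1)

theorem eventually_mul_rpow_le_of_tendsto {f : ℕ → ℝ} {p c c' : ℝ} (hc : c' < c)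
    (h : Tendsto (fun n : ℕ => f n * (n : ℝ) ^ p) atTop (nhds c)) :
    ∀ᶠ n : ℕ in atTop, c' * (n : ℝ) ^ (-p) ≤ f n := by
  filter_upwards [h.eventually (eventually_gt_nhds hc), eventually_ge_atTop 1] with n hfn hn
  have hn : (0 : ℝ) < n := by exact_mod_cast hn
  rw [← mul_rpow_mul_rpow_neg (f n) hn p]
  gcongr

theorem mul_rpow_sub_one_le_rpow_sub_rpow (hα0 : 0 ≤ α) (hα1 : α ≤ 1) {x : ℝ} (hx : 0 ≤ x) :
    α * (x + 1) ^ (α - 1) ≤ (x + 1) ^ α - x ^ α := by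
  have hx1 : 0 < x + 1 := by positivity
  -- Bernoulli's inequality `(1 - 1/(x+1))^α ≤ 1 - α/(x+1)`, scaled by `(x+1)^α`
  have hB := rpow_one_add_le_one_add_mul_self (s := -(1 / (x + 1)))
    (by rw [neg_le_neg_iff, div_le_one hx1]; linarith) hα0 hα1
  rw [show 1 + -(1 / (x + 1)) = x / (x + 1) by field_simp; ring,
    Real.div_rpow hx hx1.le, div_le_iff₀ (by positivity)] at hB
  rw [Real.rpow_sub_one hx1.ne']
  have : (x + 1) ^ α * (1 + α * -(1 / (x + 1))) = (x + 1) ^ α - α * ((x + 1) ^ α / (x + 1)) := by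
    ring
  linarith

theorem sum_range_add_one_rpow_le (hα0 : 0 < α) (hα1 : α ≤ 1) (n : ℕ) :
    ∑ i ∈ range n, ((i : ℝ) + 1) ^ (α - 1) ≤ (n : ℝ) ^ α / α := by
  rw [le_div_iff₀' hα0, mul_sum]
  calc ∑ i ∈ range n, α * ((i : ℝ) + 1) ^ (α - 1)
      ≤ ∑ i ∈ range n, (((i + 1 : ℕ) : ℝ) ^ α - (i : ℝ) ^ α) := by
        gcongr with i
        push_cast
        exact mul_rpow_sub_one_le_rpow_sub_rpow hα0.le hα1 (Nat.cast_nonneg i)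
    _ = (n : ℝ) ^ α := by
        rw [sum_range_sub (fun i : ℕ => (i : ℝ) ^ α), Nat.cast_zero, Real.zero_rpow hα0.ne',
          sub_zero]

end Asymptotics

section Convolution

variable {α cK cu : ℝ} {K u : ℕ → ℝ}

theorem sum_Ioc_mul_le_mul_sum_left (hα1 : α ≤ 1) (hcu : 0 ≤ cu) (hK0 : ∀ m, 0 ≤ K m)
    (hu : ∀ r : ℕ, 1 ≤ r → u r ≤ cu * (r : ℝ) ^ (α - 1)) {N t m₀ L : ℕ} (hN : 1 ≤ N)
    (hm₀ : N ≤ 4 * (L - m₀)) :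
    ∑ m ∈ Ioc t m₀, K m * u (L - m)
      ≤ cu * 4 ^ (1 - α) * (N : ℝ) ^ (α - 1) * ∑ m ∈ Ioc t m₀, K m := by
  rw [mul_sum]
  refine sum_le_sum fun m hm => ?_
  rw [mul_comm (K m)]
  refine mul_le_mul_of_nonneg_right ?_ (hK0 m)
  have hm := (mem_Ioc.1 hm).2
  calc u (L - m) ≤ cu * ((L - m : ℕ) : ℝ) ^ (α - 1) := hu _ (by omega)
    _ ≤ cu * (4 ^ (1 - α) * (N : ℝ) ^ (α - 1)) := by
      gcongr
      have := rpow_le_mul_rpow_of_le_mul (x := ((L - m : ℕ) : ℝ)) (y := N) (c := 4) (p := α - 1)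
        (by linarith)
        (Nat.cast_pos.2 hN) (by norm_num) (by exact_mod_cast (by omega : N ≤ 4 * (L - m)))
      rwa [neg_sub] at this
    _ = cu * 4 ^ (1 - α) * (N : ℝ) ^ (α - 1) := by ring

theorem sum_Ioc_mul_le_mul_sum_range (hα0 : 0 < α) (hcK : 0 ≤ cK) (hu0 : ∀ r, 0 ≤ u r)
    (hK : ∀ m : ℕ, 1 ≤ m → K m ≤ cK * (m : ℝ) ^ (-(1 + α))) {N m₀ L : ℕ} (hN : 1 ≤ N)
    (hm₀ : N ≤ 4 * (m₀ + 1)) :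
    ∑ m ∈ Ioc m₀ L, K m * u (L - m)
      ≤ cK * 4 ^ (1 + α) * (N : ℝ) ^ (-(1 + α)) * ∑ j ∈ range (L + 1), u j := by
  calc ∑ m ∈ Ioc m₀ L, K m * u (L - m)
      ≤ ∑ m ∈ Ioc m₀ L, cK * 4 ^ (1 + α) * (N : ℝ) ^ (-(1 + α)) * u (L - m) := by
        gcongr with m hm
        · exact hu0 _
        have hm := (mem_Ioc.1 hm).1
        calc K m ≤ cK * (m : ℝ) ^ (-(1 + α)) := hK m (by omega)
          _ ≤ cK * (4 ^ (-(-(1 + α))) * (N : ℝ) ^ (-(1 + α))) := by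
            gcongr
            exact rpow_le_mul_rpow_of_le_mul (by linarith) (by exact_mod_cast hN) (by norm_num)
              (by exact_mod_cast (by omega : N ≤ 4 * m))
          _ = cK * 4 ^ (1 + α) * (N : ℝ) ^ (-(1 + α)) := by rw [neg_neg]; ring
    _ ≤ cK * 4 ^ (1 + α) * (N : ℝ) ^ (-(1 + α)) * ∑ m ∈ range (L + 1), u (L - m) := by
        rw [← mul_sum]
        gcongr
        · exact fun m _ _ => hu0 _
        · intro m hm; simp only [mem_Ioc, mem_range] at hm ⊢; omega
    _ = cK * 4 ^ (1 + α) * (N : ℝ) ^ (-(1 + α)) * ∑ j ∈ range (L + 1), u j := by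
        congr 1
        rw [← sum_range_reflect]
        exact sum_congr rfl fun j hj => by rw [mem_range] at hj; congr 1; omega

theorem sum_range_le_of_le_rpow (hα0 : 0 < α) (hα1 : α ≤ 1) (hcu : 0 ≤ cu)
    (hu1 : ∀ r, u r ≤ 1) (hu : ∀ r : ℕ, 1 ≤ r → u r ≤ cu * (r : ℝ) ^ (α - 1)) {L N : ℕ}
    (hLN : L ≤ N) (hN : 1 ≤ N) :
    ∑ j ∈ range (L + 1), u j ≤ (1 + cu / α) * (N : ℝ) ^ α := by
  have hN1 : (1 : ℝ) ≤ (N : ℝ) ^ α := Real.one_le_rpow (by exact_mod_cast hN) hα0.le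
  have hLN : (L : ℝ) ^ α ≤ (N : ℝ) ^ α := by gcongr
  calc ∑ j ∈ range (L + 1), u j = ∑ i ∈ range L, u (i + 1) + u 0 := sum_range_succ' u L
    _ ≤ ∑ i ∈ range L, cu * ((i : ℝ) + 1) ^ (α - 1) + 1 := by
      gcongr with i
      · exact_mod_cast hu (i + 1) (by omega)
      · exact hu1 0
    _ ≤ cu * ((L : ℝ) ^ α / α) + 1 := by
      rw [← mul_sum]
      gcongr
      exact sum_range_add_one_rpow_le hα0 hα1 L
    _ ≤ (1 + cu / α) * (N : ℝ) ^ α := by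
      rw [mul_div_assoc', mul_div_right_comm]
      nlinarith [div_nonneg hcu hα0.le]

theorem sum_Ioc_mul_le (hα0 : 0 < α) (hα1 : α ≤ 1) (hcK : 0 ≤ cK) (hcu : 0 ≤ cu)
    (hK0 : ∀ m, 0 ≤ K m) (hu0 : ∀ r, 0 ≤ u r) (hu1 : ∀ r, u r ≤ 1)
    (hK : ∀ m : ℕ, 1 ≤ m → K m ≤ cK * (m : ℝ) ^ (-(1 + α)))
    (hu : ∀ r : ℕ, 1 ≤ r → u r ≤ cu * (r : ℝ) ^ (α - 1)) {N t L : ℕ} (hN : 1 ≤ N)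
    (hL : t + (N - N / 2) = L) (hLN : L ≤ N) :
    ∑ m ∈ Ioc t L, K m * u (L - m) ≤ (N : ℝ) ^ (α - 1) * (cu * 4 ^ (1 - α) *
      ∑ m ∈ Ioc t L, K m + cK * 4 ^ (1 + α) * (1 + cu / α) * (N : ℝ) ^ (-α)) := by
  -- at `m₀`, both `L - m` (for `m ≤ m₀`) and `m` (for `m > m₀`) are at least `N / 4`
  set m₀ := t + (N - N / 2) / 2
  have hnear := sum_Ioc_mul_le_mul_sum_left hα1 hcu hK0 hu (t := t) hN
    (by omega : N ≤ 4 * (L - m₀))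
  have hfar := sum_Ioc_mul_le_mul_sum_range hα0 hcK hu0 hK (L := L) hN (by omega : N ≤ 4 * (m₀ + 1))
  have hKsub : ∑ m ∈ Ioc t m₀, K m ≤ ∑ m ∈ Ioc t L, K m :=
    sum_le_sum_of_subset_of_nonneg (Ioc_subset_Ioc_right (by omega)) fun m _ _ => hK0 m
  have hN0 : (0 : ℝ) < N := Nat.cast_pos.2 hN
  have hpow : (N : ℝ) ^ (-(1 + α)) * (N : ℝ) ^ α = (N : ℝ) ^ (α - 1) * (N : ℝ) ^ (-α) := by
    rw [← Real.rpow_add hN0, ← Real.rpow_add hN0]; ring_nf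
  rw [← sum_Ioc_consecutive _ (by omega : t ≤ m₀) (by omega : m₀ ≤ L)]
  calc ∑ m ∈ Ioc t m₀, K m * u (L - m) + ∑ m ∈ Ioc m₀ L, K m * u (L - m)
      ≤ cu * 4 ^ (1 - α) * (N : ℝ) ^ (α - 1) * ∑ m ∈ Ioc t L, K m
        + cK * 4 ^ (1 + α) * (N : ℝ) ^ (-(1 + α)) * ((1 + cu / α) * (N : ℝ) ^ α) := by
        gcongr
        · exact hnear.trans (by gcongr)
        · exact hfar.trans (by gcongr; exact sum_range_le_of_le_rpow hα0 hα1 hcu hu1 hu hLN hN)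
    _ = _ := by linear_combination (cK * 4 ^ (1 + α) * (1 + cu / α)) * hpow

theorem eventually_mul_rpow_le_sum_Ioc_half (hα0 : 0 ≤ α) {c : ℝ} (hc : 0 ≤ c)
    (hK : ∀ᶠ m : ℕ in atTop, c * (m : ℝ) ^ (-(1 + α)) ≤ K m) :
    ∀ᶠ N : ℕ in atTop, c / 2 * (N : ℝ) ^ (-α) ≤ ∑ m ∈ Ioc (N / 2) N, K m := by
  obtain ⟨m₁, hm₁⟩ := eventually_atTop.1 hK
  filter_upwards [eventually_ge_atTop (2 * m₁ + 1)] with N hN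
  have hN0 : (0 : ℝ) < N := by exact_mod_cast (by omega : 0 < N)
  have hterm : ∀ m ∈ Ioc (N / 2) N, c * (N : ℝ) ^ (-(1 + α)) ≤ K m := fun m hm => by
    obtain ⟨hm1, hm2⟩ := mem_Ioc.1 hm
    calc c * (N : ℝ) ^ (-(1 + α)) ≤ c * (m : ℝ) ^ (-(1 + α)) :=
          mul_le_mul_of_nonneg_left (Real.rpow_le_rpow_of_nonpos
            (Nat.cast_pos.2 (by omega)) (Nat.cast_le.2 hm2) (by linarith)) hc
      _ ≤ K m := hm₁ m (by omega)
  have hcard : (N : ℝ) / 2 ≤ (#(Ioc (N / 2) N) : ℝ) := by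
    rw [Nat.card_Ioc, Nat.cast_sub (Nat.div_le_self N 2)]
    linarith [Nat.cast_div_le (α := ℝ) (m := N) (n := 2)]
  calc c / 2 * (N : ℝ) ^ (-α) = (N : ℝ) / 2 * (c * (N : ℝ) ^ (-(1 + α))) := by
        rw [show -α = 1 + -(1 + α) by ring, Real.rpow_add hN0, Real.rpow_one]; ring
    _ ≤ #(Ioc (N / 2) N) * (c * (N : ℝ) ^ (-(1 + α))) := by gcongr
    _ ≤ ∑ m ∈ Ioc (N / 2) N, K m := by
        simpa only [nsmul_eq_mul] using card_nsmul_le_sum _ _ _ hterm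

theorem exists_eventually_sum_Ioc_mul_le (hα0 : 0 < α) (hα1 : α < 1) {tail : ℕ → ℝ}
    (hK0 : ∀ m, 0 ≤ K m) (hu0 : ∀ r, 0 ≤ u r) (hu1 : ∀ r, u r ≤ 1)
    (hK : Tendsto (fun n : ℕ => K n * (n : ℝ) ^ (1 + α)) atTop (nhds cK)) (hcK : 0 < cK)
    (hu : Tendsto (fun n : ℕ => u n * (n : ℝ) ^ (1 - α)) atTop (nhds cu)) (hcu : 0 < cu)
    (htail : ∀ t n, ∑ m ∈ Ioc t n, K m ≤ tail t) (htail_anti : Antitone tail) :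
    ∃ C, 0 < C ∧ ∀ᶠ N : ℕ in atTop, ∀ s ≤ N / 2,
      ∑ m ∈ Ioc (N / 2 - s) (N - s), K m * u (N - s - m) ≤ C * u N * tail (N / 2 - s) := by
  obtain ⟨cK', hcK', hKle⟩ := exists_le_mul_rpow_of_tendsto hK
  obtain ⟨cu', hcu', hule⟩ := exists_le_mul_rpow_of_tendsto hu
  simp only [neg_sub] at hule
  have hKge := eventually_mul_rpow_le_sum_Ioc_half hα0.le (by positivity)
    (eventually_mul_rpow_le_of_tendsto (half_lt_self hcK) hK)
  have huge := eventually_mul_rpow_le_of_tendsto (half_lt_self hcu) hu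
  simp only [neg_sub] at huge
  set A := cu' * 4 ^ (1 - α)
  set B := cK' * 4 ^ (1 + α) * (1 + cu' / α)
  refine ⟨(A + B / (cK / 2 / 2)) / (cu / 2), by positivity, ?_⟩
  filter_upwards [hKge, huge, eventually_ge_atTop 1] with N hNK hNu hN s hs
  set T := tail (N / 2 - s)
  have hKT : ∑ m ∈ Ioc (N / 2 - s) (N - s), K m ≤ T := htail _ _
  have hT0 : 0 ≤ T := (sum_nonneg fun m _ => hK0 m).trans hKT
  have hNT : (N : ℝ) ^ (-α) ≤ T / (cK / 2 / 2) := by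
    rw [le_div_iff₀' (by positivity)]
    exact hNK.trans ((htail _ _).trans (htail_anti (Nat.sub_le _ _)))
  have hNu' : (N : ℝ) ^ (α - 1) ≤ u N / (cu / 2) := by
    rwa [le_div_iff₀' (by positivity)]
  calc ∑ m ∈ Ioc (N / 2 - s) (N - s), K m * u (N - s - m)
      ≤ (N : ℝ) ^ (α - 1) * (A * ∑ m ∈ Ioc (N / 2 - s) (N - s), K m + B * (N : ℝ) ^ (-α)) :=
        sum_Ioc_mul_le hα0 hα1.le hcK'.le hcu'.le hK0 hu0 hu1 hKle hule hN (by omega) (by omega)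
    _ ≤ (N : ℝ) ^ (α - 1) * (A * T + B * (T / (cK / 2 / 2))) := by gcongr
    _ = (A + B / (cK / 2 / 2)) * (N : ℝ) ^ (α - 1) * T := by ring
    _ ≤ (A + B / (cK / 2 / 2)) * (u N / (cu / 2)) * T := by gcongr
    _ = (A + B / (cK / 2 / 2)) / (cu / 2) * u N * T := by ring

end Convolution

section Fibers

variable {Ω ι : Type*} [MeasurableSpace Ω] [Countable ι] {π : Ω → ι}

theorem lintegral_comp_eq_tsum (hπ : ∀ i, MeasurableSet (π ⁻¹' {i})) (ν : Measure Ω)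
    (g : ι → ENNReal) : ∫⁻ w, g (π w) ∂ν = ∑' i, g i * ν (π ⁻¹' {i}) := by
  calc ∫⁻ w, g (π w) ∂ν = ∫⁻ w in ⋃ i, π ⁻¹' {i}, g (π w) ∂ν := by
        rw [← Set.preimage_iUnion, Set.iUnion_of_singleton, Set.preimage_univ,
          Measure.restrict_univ]
    _ = ∑' i, ∫⁻ w in π ⁻¹' {i}, g (π w) ∂ν := lintegral_iUnion hπ (pairwise_disjoint_fiber π) _
    _ = ∑' i, g i * ν (π ⁻¹' {i}) := tsum_congr fun i => by
        rw [setLIntegral_congr_fun (hπ i) fun w (hw : π w = i) => by rw [hw], setLIntegral_const]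

theorem setLIntegral_comp_le_mul_lintegral (hπ : ∀ i, MeasurableSet (π ⁻¹' {i}))
    {μ : Measure Ω} {A : Set Ω} {c : ENNReal} (h : ∀ i, μ (π ⁻¹' {i} ∩ A) ≤ c * μ (π ⁻¹' {i}))
    (g : ι → ENNReal) : ∫⁻ w in A, g (π w) ∂μ ≤ c * ∫⁻ w, g (π w) ∂μ := by
  rw [lintegral_comp_eq_tsum hπ, lintegral_comp_eq_tsum hπ, ← ENNReal.tsum_mul_left]
  refine ENNReal.tsum_le_tsum fun i => ?_
  rw [Measure.restrict_apply (hπ i), mul_left_comm]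
  gcongr
  exact h i

theorem setIntegral_comp_le_mul_integral (hπ : ∀ i, MeasurableSet (π ⁻¹' {i}))
    {μ : Measure Ω} {A : Set Ω} {c : ℝ} (hc : 0 ≤ c)
    (h : ∀ i, μ (π ⁻¹' {i} ∩ A) ≤ ENNReal.ofReal c * μ (π ⁻¹' {i})) {g : ι → ℝ}
    (hg0 : ∀ w, 0 ≤ g (π w)) (hg : Integrable (fun w => g (π w)) μ) :
    ∫ w in A, g (π w) ∂μ ≤ c * ∫ w, g (π w) ∂μ := by
  rw [integral_eq_lintegral_of_nonneg_ae (ae_of_all _ hg0) hg.1.restrict,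
    integral_eq_lintegral_of_nonneg_ae (ae_of_all _ hg0) hg.1, ← ENNReal.toReal_ofReal hc,
    ← ENNReal.toReal_mul]
  exact ENNReal.toReal_mono (ENNReal.mul_ne_top ENNReal.ofReal_ne_top hg.lintegral_lt_top.ne)
    (setLIntegral_comp_le_mul_lintegral hπ h (fun i => ENNReal.ofReal (g i)))

end Fibers

section Renewal

variable {Ω : Type*} {ξ : ℕ → Ω → ℕ}

def renewalSet (ξ : ℕ → Ω → ℕ) (w : Ω) : Set ℕ := Set.range fun k => ∑ m ∈ range k, ξ m w

def jumps (ξ : ℕ → Ω → ℕ) (k : ℕ) (w : Ω) : List ℕ := (List.range k).map (ξ · w)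

def cylinder (ξ : ℕ → Ω → ℕ) (a : List ℕ) : Set Ω := {w | jumps ξ a.length w = a}

/-- The jumps up to the last renewal in `[0, M]`. Since jumps are `≥ 1`, that renewal has index
at most `M`. -/
def lastJumps (ξ : ℕ → Ω → ℕ) (M : ℕ) (w : Ω) : List ℕ :=
  jumps ξ (Nat.findGreatest (fun k => ∑ m ∈ range k, ξ m w ≤ M) M) w

@[simp]
theorem length_jumps (k : ℕ) (w : Ω) : (jumps ξ k w).length = k := by simp [jumps]

theorem jumps_succ (k : ℕ) (w : Ω) : jumps ξ (k + 1) w = jumps ξ k w ++ [ξ k w] := by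
  simp [jumps, List.range_succ]

theorem sum_jumps (k : ℕ) (w : Ω) : (jumps ξ k w).sum = ∑ m ∈ range k, ξ m w := by
  induction k with
  | zero => simp [jumps]
  | succ k ih => rw [jumps_succ, List.sum_append, ih, sum_range_succ]; simp

theorem take_jumps (j k : ℕ) (w : Ω) : (jumps ξ k w).take j = jumps ξ (min j k) w := by
  simp [jumps, ← List.map_take]

theorem mem_cylinder_jumps (k : ℕ) (w : Ω) : w ∈ cylinder ξ (jumps ξ k w) := by
  simp [cylinder]

theorem mem_cylinder_iff {a : List ℕ} {w : Ω} :
    w ∈ cylinder ξ a ↔ ∀ i < a.length, ξ i w = a.getD i 0 := by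
  simp only [cylinder, Set.mem_ofPred_eq, List.ext_getElem_iff, length_jumps, true_and]
  refine forall_congr' fun i => ⟨fun h hi => ?_, fun h hi _ => ?_⟩
  · simpa [List.getElem?_eq_getElem hi, jumps] using h hi (by simpa using hi)
  · simpa [List.getElem?_eq_getElem hi, jumps] using h hi

theorem strictMono_sum_range (hξ : ∀ n w, 1 ≤ ξ n w) (w : Ω) :
    StrictMono fun k => ∑ m ∈ range k, ξ m w :=
  strictMono_nat_of_lt_succ fun k => by rw [sum_range_succ]; have := hξ k w; omega

theorem mem_cylinder_of_prefix {a b : List ℕ} (hab : a <+: b) {w : Ω} (hw : w ∈ cylinder ξ b) :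
    w ∈ cylinder ξ a := by
  have hlen : a.length ≤ b.length := hab.length_le
  change jumps ξ a.length w = a
  rw [List.prefix_iff_eq_take.1 hab, ← hw, take_jumps, min_eq_left hlen, length_jumps]

theorem disjoint_cylinder (hξ : ∀ n w, 1 ≤ ξ n w) {a b : List ℕ} (hab : a.sum = b.sum)
    (hne : a ≠ b) : Disjoint (cylinder ξ a) (cylinder ξ b) := by
  refine Set.disjoint_left.2 fun w (ha : jumps ξ a.length w = a)
    (hb : jumps ξ b.length w = b) => hne ?_
  have hlen : a.length = b.length := (strictMono_sum_range hξ w).injective <| by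
    simp only [← sum_jumps, ha, hb, hab]
  rw [← ha, ← hb, hlen]

theorem setOf_mem_renewalSet_eq (r : ℕ) :
    {w | r ∈ renewalSet ξ w} = ⋃ c ∈ {c : List ℕ | c.sum = r}, cylinder ξ c := by
  ext w
  simp only [renewalSet, Set.mem_range, Set.mem_ofPred_eq, Set.mem_iUnion, exists_prop]
  constructor
  · rintro ⟨k, rfl⟩
    exact ⟨jumps ξ k w, sum_jumps k w, mem_cylinder_jumps k w⟩
  · rintro ⟨c, rfl, hc : jumps ξ c.length w = c⟩
    exact ⟨c.length, by rw [← sum_jumps, hc]⟩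

theorem cylinder_inter_setOf_mem_renewalSet (hξ : ∀ n w, 1 ≤ ξ n w) {b : List ℕ} {N : ℕ}
    (hb : b.sum ≤ N) :
    cylinder ξ b ∩ {w | N ∈ renewalSet ξ w}
      = ⋃ c ∈ {c : List ℕ | c.sum = N - b.sum}, cylinder ξ (b ++ c) := by
  ext w
  simp only [renewalSet, Set.mem_inter_iff, Set.mem_range, Set.mem_ofPred_eq, Set.mem_iUnion,
    exists_prop]
  constructor
  · rintro ⟨hw : jumps ξ b.length w = b, k, rfl⟩
    have hbk : b.length ≤ k := (strictMono_sum_range hξ w).le_iff_le.1 <| by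
      rw [← sum_jumps, hw]; exact hb
    have htake : (jumps ξ k w).take b.length = b := by rw [take_jumps, min_eq_left hbk, hw]
    refine ⟨(jumps ξ k w).drop b.length, ?_, ?_⟩
    · have := congrArg List.sum (List.take_append_drop b.length (jumps ξ k w))
      rw [htake, List.sum_append, sum_jumps] at this
      omega
    · nth_rw 1 [← htake]; rw [List.take_append_drop]; exact mem_cylinder_jumps k w
  · rintro ⟨c, hc, hw⟩
    refine ⟨mem_cylinder_of_prefix (List.prefix_append b c) hw, (b ++ c).length, ?_⟩
    change jumps ξ (b ++ c).length w = b ++ c at hw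
    rw [← sum_jumps, hw, List.sum_append, hc]
    omega

theorem findGreatest_sum_range_eq_iff (hξ : ∀ n w, 1 ≤ ξ n w) {M k : ℕ} {w : Ω} :
    Nat.findGreatest (fun k => ∑ m ∈ range k, ξ m w ≤ M) M = k ↔
      ∑ m ∈ range k, ξ m w ≤ M ∧ M < ∑ m ∈ range (k + 1), ξ m w := by
  have hmono := strictMono_sum_range hξ w
  rw [Nat.findGreatest_eq_iff]
  constructor
  · rintro ⟨hkM, hk, hgt⟩
    refine ⟨?_, ?_⟩
    · rcases Nat.eq_zero_or_pos k with rfl | hk0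
      · simp
      · exact hk hk0.ne'
    · by_contra! h
      by_cases hk1 : k + 1 ≤ M
      · exact hgt (Nat.lt_succ_self k) hk1 h
      · have : k + 1 ≤ ∑ m ∈ range (k + 1), ξ m w := hmono.le_apply
        omega
  · rintro ⟨hk, hk1⟩
    refine ⟨(hmono.le_apply (x := k)).trans hk, fun _ => hk, fun n hkn _ hn => ?_⟩
    have : ∑ m ∈ range (k + 1), ξ m w ≤ ∑ m ∈ range n, ξ m w := hmono.monotone hkn
    omega

theorem lastJumps_eq_iff (hξ : ∀ n w, 1 ≤ ξ n w) {M : ℕ} {l : List ℕ} {w : Ω} :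
    lastJumps ξ M w = l ↔ w ∈ cylinder ξ l ∧ l.sum ≤ M ∧ M < l.sum + ξ l.length w := by
  constructor
  · rintro rfl
    obtain ⟨hle, hlt⟩ := (findGreatest_sum_range_eq_iff hξ).1 rfl
    refine ⟨mem_cylinder_jumps _ w, ?_, ?_⟩
    · rwa [lastJumps, sum_jumps]
    · rwa [lastJumps, sum_jumps, length_jumps, ← sum_range_succ]
  · rintro ⟨hw : jumps ξ l.length w = l, hle, hlt⟩
    have : Nat.findGreatest (fun k => ∑ m ∈ range k, ξ m w ≤ M) M = l.length :=
      (findGreatest_sum_range_eq_iff hξ).2 ⟨by rwa [← sum_jumps, hw], by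
        rwa [sum_range_succ, ← sum_jumps, hw]⟩
    rw [lastJumps, this, hw]

theorem setOf_lastJumps_eq (hξ : ∀ n w, 1 ≤ ξ n w) (M : ℕ) (l : List ℕ) :
    {w | lastJumps ξ M w = l}
      = cylinder ξ l ∩ ξ l.length ⁻¹' {x | l.sum ≤ M ∧ M < l.sum + x} := by
  ext w
  exact lastJumps_eq_iff hξ

theorem setOf_le_mem_renewalSet_eq (hξ : ∀ n w, 1 ≤ ξ n w) (M : ℕ) (w : Ω) :
    {i | i ≤ M ∧ i ∈ renewalSet ξ w} = {i | ∃ j, ((lastJumps ξ M w).take j).sum = i} := by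
  obtain ⟨hw : jumps ξ _ w = _, hle, hlt⟩ := (lastJumps_eq_iff hξ (M := M) (w := w)).1 rfl
  generalize lastJumps ξ M w = l at hw hle hlt ⊢
  have hmono := (strictMono_sum_range hξ w).monotone
  ext i
  simp only [renewalSet, Set.mem_range, Set.mem_ofPred_eq]
  constructor
  · rintro ⟨hi, k, rfl⟩
    have hk : k ≤ l.length := by
      by_contra! h
      have : ∑ m ∈ range (l.length + 1), ξ m w ≤ ∑ m ∈ range k, ξ m w := hmono h
      rw [sum_range_succ, ← sum_jumps, hw] at this
      omega
    exact ⟨k, by rw [← hw, take_jumps, min_eq_left hk, sum_jumps]⟩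
  · rintro ⟨j, rfl⟩
    rw [← hw, take_jumps, sum_jumps]
    have : ∑ m ∈ range (min j l.length), ξ m w ≤ ∑ m ∈ range l.length, ξ m w :=
      hmono (min_le_right j l.length)
    rw [← sum_jumps l.length, hw] at this
    exact ⟨by omega, _, rfl⟩

theorem setOf_lastJumps_eq_inter_subset (hξ : ∀ n w, 1 ≤ ξ n w) {M N : ℕ} (hMN : M < N)
    (l : List ℕ) :
    {w | lastJumps ξ M w = l} ∩ {w | N ∈ renewalSet ξ w} ⊆
      ⋃ m ∈ Ioc (M - l.sum) (N - l.sum), cylinder ξ (l ++ [m]) ∩ {w | N ∈ renewalSet ξ w} := by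
  rintro w ⟨hl, k, hk : ∑ m ∈ range k, ξ m w = N⟩
  obtain ⟨hw : jumps ξ l.length w = l, hle, hlt⟩ := (lastJumps_eq_iff hξ).1 hl
  have hmono := strictMono_sum_range hξ w
  have hlk : l.length < k := hmono.lt_iff_lt.1 <| by
    change ∑ m ∈ range l.length, ξ m w < ∑ m ∈ range k, ξ m w
    rw [hk, ← sum_jumps, hw]; omega
  have hstep : ∑ m ∈ range (l.length + 1), ξ m w ≤ N := hk ▸ hmono.monotone hlk
  rw [sum_range_succ, ← sum_jumps, hw] at hstep
  refine Set.mem_biUnion (x := ξ l.length w) (mem_Ioc.2 ⟨by omega, by omega⟩) ⟨?_, k, hk⟩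
  change jumps ξ (l ++ [_]).length w = _
  rw [List.length_append, List.length_singleton, jumps_succ, hw]

section Measure

variable [MeasurableSpace Ω] {μ : Measure Ω}

theorem measurableSet_cylinder (hm : ∀ n, Measurable (ξ n)) (a : List ℕ) :
    MeasurableSet (cylinder ξ a) := by
  have : cylinder ξ a = ⋂ i ∈ range a.length, ξ i ⁻¹' {a.getD i 0} := by
    ext w; simp [mem_cylinder_iff]
  rw [this]
  exact .biInter (Set.to_countable _) fun i _ => hm i .of_discrete

theorem measure_biInter_preimage (hm : ∀ n, Measurable (ξ n)) (hind : iIndepFun ξ μ)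
    (hid : ∀ n, μ.map (ξ n) = μ.map (ξ 0)) (n : ℕ) (B : ℕ → Set ℕ) :
    μ (⋂ i ∈ range n, ξ i ⁻¹' B i) = ∏ i ∈ range n, μ (ξ 0 ⁻¹' B i) := by
  rw [hind.measure_inter_preimage_eq_mul _ fun _ _ => .of_discrete]
  refine prod_congr rfl fun i _ => ?_
  rw [← Measure.map_apply (hm i) .of_discrete, hid i, Measure.map_apply (hm 0) .of_discrete]

theorem measure_cylinder_inter_preimage (hm : ∀ n, Measurable (ξ n)) (hind : iIndepFun ξ μ)
    (hid : ∀ n, μ.map (ξ n) = μ.map (ξ 0)) (a : List ℕ) (B : Set ℕ) :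
    μ (cylinder ξ a ∩ ξ a.length ⁻¹' B)
      = (a.map fun m => μ {w | ξ 0 w = m}).prod * μ (ξ 0 ⁻¹' B) := by
  have hset : cylinder ξ a ∩ ξ a.length ⁻¹' B
      = ⋂ i ∈ range (a.length + 1), ξ i ⁻¹' (if i < a.length then {a.getD i 0} else B) := by
    ext w
    simp only [Set.mem_inter_iff, mem_cylinder_iff, Set.mem_iInter, mem_range, Set.mem_preimage,
      Nat.lt_succ_iff_lt_or_eq, or_imp, forall_and, forall_eq, lt_irrefl, if_false]
    refine and_congr (forall₂_congr fun i hi => ?_) Iff.rfl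
    simp [hi]
  rw [hset, measure_biInter_preimage hm hind hid, prod_range_succ, if_neg (lt_irrefl _),
    prod_range, ← Fin.prod_univ_fun_getElem]
  congr 1
  refine prod_congr rfl fun i _ => ?_
  rw [if_pos i.2, List.getD_eq_getElem]
  rfl

theorem measure_cylinder [IsProbabilityMeasure μ] (hm : ∀ n, Measurable (ξ n))
    (hind : iIndepFun ξ μ) (hid : ∀ n, μ.map (ξ n) = μ.map (ξ 0)) (a : List ℕ) :
    μ (cylinder ξ a) = (a.map fun m => μ {w | ξ 0 w = m}).prod := by
  simpa using measure_cylinder_inter_preimage hm hind hid a Set.univ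

theorem measure_setOf_mem_renewalSet [IsProbabilityMeasure μ] (hξ : ∀ n w, 1 ≤ ξ n w)
    (hm : ∀ n, Measurable (ξ n)) (hind : iIndepFun ξ μ) (hid : ∀ n, μ.map (ξ n) = μ.map (ξ 0))
    (r : ℕ) :
    μ {w | r ∈ renewalSet ξ w}
      = ∑' c : {c : List ℕ | c.sum = r}, (c.1.map fun m => μ {w | ξ 0 w = m}).prod := by
  rw [setOf_mem_renewalSet_eq, measure_biUnion (Set.to_countable _)
    (fun a ha b hb hne => disjoint_cylinder hξ (ha.trans hb.symm) hne)
    fun c _ => measurableSet_cylinder hm c]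
  exact tsum_congr fun c => measure_cylinder hm hind hid c

theorem measure_cylinder_inter_setOf_mem_renewalSet [IsProbabilityMeasure μ]
    (hξ : ∀ n w, 1 ≤ ξ n w) (hm : ∀ n, Measurable (ξ n)) (hind : iIndepFun ξ μ)
    (hid : ∀ n, μ.map (ξ n) = μ.map (ξ 0)) {b : List ℕ} {N : ℕ} (hb : b.sum ≤ N) :
    μ (cylinder ξ b ∩ {w | N ∈ renewalSet ξ w})
      = (b.map fun m => μ {w | ξ 0 w = m}).prod * μ {w | N - b.sum ∈ renewalSet ξ w} := by
  rw [cylinder_inter_setOf_mem_renewalSet hξ hb, measure_biUnion (Set.to_countable _) ?_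
    fun c _ => measurableSet_cylinder hm _, measure_setOf_mem_renewalSet hξ hm hind hid,
    ← ENNReal.tsum_mul_left]
  · exact tsum_congr fun c => by
      rw [measure_cylinder hm hind hid, List.map_append, List.prod_append]
  · intro c hc c' hc' hne
    refine disjoint_cylinder hξ ?_ fun h => hne (List.append_cancel_left h)
    simp only [List.sum_append, Set.mem_ofPred_eq] at hc hc' ⊢
    rw [hc, hc']

theorem measurableSet_setOf_lastJumps_eq (hξ : ∀ n w, 1 ≤ ξ n w) (hm : ∀ n, Measurable (ξ n))
    (M : ℕ) (l : List ℕ) : MeasurableSet {w | lastJumps ξ M w = l} := by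
  rw [setOf_lastJumps_eq hξ]
  exact (measurableSet_cylinder hm l).inter (hm _ .of_discrete)

theorem measure_setOf_lastJumps_eq (hξ : ∀ n w, 1 ≤ ξ n w) (hm : ∀ n, Measurable (ξ n))
    (hind : iIndepFun ξ μ) (hid : ∀ n, μ.map (ξ n) = μ.map (ξ 0)) {M : ℕ} {l : List ℕ}
    (hl : l.sum ≤ M) :
    μ {w | lastJumps ξ M w = l}
      = (l.map fun m => μ {w | ξ 0 w = m}).prod * μ {w | M - l.sum < ξ 0 w} := by
  rw [setOf_lastJumps_eq hξ, measure_cylinder_inter_preimage hm hind hid]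
  congr 2
  ext w
  simp only [Set.mem_preimage, Set.mem_ofPred_eq]
  omega

theorem measure_setOf_lastJumps_eq_inter_le [IsProbabilityMeasure μ] (hξ : ∀ n w, 1 ≤ ξ n w)
    (hm : ∀ n, Measurable (ξ n)) (hind : iIndepFun ξ μ) (hid : ∀ n, μ.map (ξ n) = μ.map (ξ 0))
    {M N : ℕ} (hMN : M < N) {l : List ℕ} (hl : l.sum ≤ M) :
    μ ({w | lastJumps ξ M w = l} ∩ {w | N ∈ renewalSet ξ w})
      ≤ (l.map fun m => μ {w | ξ 0 w = m}).prod * ∑ m ∈ Ioc (M - l.sum) (N - l.sum),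
          μ {w | ξ 0 w = m} * μ {w | N - l.sum - m ∈ renewalSet ξ w} := by
  refine (measure_mono (setOf_lastJumps_eq_inter_subset hξ hMN l)).trans <|
    (measure_biUnion_finset_le _ _).trans_eq ?_
  rw [mul_sum]
  refine sum_congr rfl fun m hmem => ?_
  rw [measure_cylinder_inter_setOf_mem_renewalSet hξ hm hind hid
    (by rw [List.sum_append, List.sum_singleton]; rw [mem_Ioc] at hmem; omega)]
  simp [List.sum_append, mul_assoc, Nat.sub_sub]

theorem sum_Ioc_measure_le [IsFiniteMeasure μ] (hm : ∀ n, Measurable (ξ n)) (t n : ℕ) :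
    ∑ m ∈ Ioc t n, (μ {w | ξ 0 w = m}).toReal ≤ (μ {w | t < ξ 0 w}).toReal := by
  rw [← ENNReal.toReal_sum fun _ _ => measure_ne_top _ _]
  refine ENNReal.toReal_mono (measure_ne_top _ _) ?_
  change ∑ m ∈ Ioc t n, μ (ξ 0 ⁻¹' {m}) ≤ _
  rw [sum_measure_preimage_singleton _ fun _ _ => hm 0 .of_discrete]
  exact measure_mono fun w (hw : ξ 0 w ∈ Ioc t n) => (mem_Ioc.1 hw).1

theorem antitone_measure_lt [IsFiniteMeasure μ] :
    Antitone fun t : ℕ => (μ {w | t < ξ 0 w}).toReal :=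
  fun _ _ h => ENNReal.toReal_mono (measure_ne_top _ _) (measure_mono fun _ hw => h.trans_lt hw)

theorem measure_setOf_lastJumps_eq_inter_le_mul [IsProbabilityMeasure μ]
    (hξ : ∀ n w, 1 ≤ ξ n w) (hm : ∀ n, Measurable (ξ n)) (hind : iIndepFun ξ μ)
    (hid : ∀ n, μ.map (ξ n) = μ.map (ξ 0)) {M N : ℕ} (hMN : M < N) {c : ℝ} (hc : 0 ≤ c)
    (hconv : ∀ s ≤ M, ∑ m ∈ Ioc (M - s) (N - s),
      (μ {w | ξ 0 w = m}).toReal * (μ {w | N - s - m ∈ renewalSet ξ w}).toReal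
        ≤ c * (μ {w | M - s < ξ 0 w}).toReal) (l : List ℕ) :
    μ ({w | lastJumps ξ M w = l} ∩ {w | N ∈ renewalSet ξ w})
      ≤ ENNReal.ofReal c * μ {w | lastJumps ξ M w = l} := by
  by_cases hl : l.sum ≤ M
  · rw [measure_setOf_lastJumps_eq hξ hm hind hid hl, mul_left_comm]
    refine (measure_setOf_lastJumps_eq_inter_le hξ hm hind hid hMN hl).trans ?_
    gcongr
    have hfin : ∀ m, μ {w | ξ 0 w = m} * μ {w | N - l.sum - m ∈ renewalSet ξ w} ≠ ⊤ :=
      fun _ => ENNReal.mul_ne_top (measure_ne_top _ _) (measure_ne_top _ _)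
    refine (ENNReal.toReal_le_toReal (ENNReal.sum_ne_top.2 fun m _ => hfin m)
      (by finiteness)).1 ?_
    rw [ENNReal.toReal_sum fun m _ => hfin m, ENNReal.toReal_mul, ENNReal.toReal_ofReal hc]
    simpa only [ENNReal.toReal_mul] using hconv _ hl
  · have : {w | lastJumps ξ M w = l} = ∅ := by
      ext w; simp [lastJumps_eq_iff hξ, hl]
    simp [this]

theorem setIntegral_setOf_mem_renewalSet_le [IsProbabilityMeasure μ] (hξ : ∀ n w, 1 ≤ ξ n w)
    (hm : ∀ n, Measurable (ξ n)) (hind : iIndepFun ξ μ) (hid : ∀ n, μ.map (ξ n) = μ.map (ξ 0))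
    {M N : ℕ} (hMN : M < N) {c : ℝ} (hc : 0 ≤ c)
    (hconv : ∀ s ≤ M, ∑ m ∈ Ioc (M - s) (N - s),
      (μ {w | ξ 0 w = m}).toReal * (μ {w | N - s - m ∈ renewalSet ξ w}).toReal
        ≤ c * (μ {w | M - s < ξ 0 w}).toReal)
    {F : Ω → ℝ} (hF0 : ∀ w, 0 ≤ F w) (hF : Integrable F μ) {G : Set ℕ → ℝ}
    (hFG : ∀ w, F w = G {i | i ≤ M ∧ i ∈ renewalSet ξ w}) :
    ∫ w in {w | N ∈ renewalSet ξ w}, F w ∂μ ≤ c * ∫ w, F w ∂μ := by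
  obtain rfl : F = fun w => G {i | ∃ j, ((lastJumps ξ M w).take j).sum = i} :=
    funext fun w => by rw [hFG, setOf_le_mem_renewalSet_eq hξ]
  exact setIntegral_comp_le_mul_integral (g := fun l => G {i | ∃ j, (l.take j).sum = i})
    (measurableSet_setOf_lastJumps_eq hξ hm M) hc
    (measure_setOf_lastJumps_eq_inter_le_mul hξ hm hind hid hMN hc hconv) hF0 hF

end Measure

end Renewal

end RenewalBridge

open RenewalBridge

/-- Absolute continuity of the renewal bridge on its first half: if
`K(n) ~ C_K n^{-(1+α)}` and `u(n) ~ (α sin(πα))/(π C_K) n^{α-1}`, there is a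
constant `C` such that for all `N ≥ 2` and every bounded non-negative functional
`F` measurable with respect to `σ(τ ∩ [0, ⌊N/2⌋])`,
`E[F(τ) | N ∈ τ] ≤ C E[F(τ)]`. -/
theorem renewal_bridge_absolute_continuity
    {Ω : Type*} [MeasurableSpace Ω] (μ : Measure Ω) [IsProbabilityMeasure μ]
    (ξ : ℕ → Ω → ℕ) (hξmeas : ∀ n, Measurable (ξ n))
    (hξindep : iIndepFun ξ μ)
    (hξid : ∀ n, Measure.map (ξ n) μ = Measure.map (ξ 0) μ)
    (hξpos : ∀ n w, 1 ≤ ξ n w)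
    (inτ : ℕ → Ω → Prop)
    (hinτ : ∀ n w, inτ n w ↔ ∃ k : ℕ, (∑ m ∈ Finset.range k, ξ m w) = n)
    (α : ℝ) (hα0 : 0 < α) (hα1 : α < 1) (CK : ℝ) (hCK : 0 < CK)
    (hK : Tendsto (fun n : ℕ => (μ {w | ξ 0 w = n}).toReal * (n : ℝ) ^ (1 + α))
      atTop (nhds CK))
    (hu : Tendsto (fun n : ℕ =>
        (μ {w | inτ n w}).toReal * (n : ℝ) ^ (1 - α))
      atTop (nhds (α * Real.sin (Real.pi * α) / (Real.pi * CK)))) :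
    ∃ C : ℝ, 0 < C ∧ ∀ N : ℕ, 2 ≤ N →
      0 < (μ {w | inτ N w}).toReal →
      ∀ F : Ω → ℝ, Measurable F → (∀ w, 0 ≤ F w) → (∃ B : ℝ, ∀ w, F w ≤ B) →
      (∃ G : Set ℕ → ℝ, ∀ w, F w = G {i | i ≤ N / 2 ∧ inτ i w}) →
      (∫ w in {w | inτ N w}, F w ∂μ) / (μ {w | inτ N w}).toReal
        ≤ C * ∫ w, F w ∂μ := by
  obtain rfl : inτ = fun n w => n ∈ renewalSet ξ w := funext₂ fun n w => propext (hinτ n w)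
  beta_reduce at hu ⊢
  have hsin : 0 < Real.sin (Real.pi * α) :=
    Real.sin_pos_of_pos_of_lt_pi (by positivity) (mul_lt_of_lt_one_right Real.pi_pos hα1)
  obtain ⟨C₁, hC₁, hconv⟩ := exists_eventually_sum_Ioc_mul_le hα0 hα1
    (fun _ => ENNReal.toReal_nonneg) (fun _ => ENNReal.toReal_nonneg)
    (fun _ => ENNReal.toReal_le_of_le_ofReal zero_le_one (by simpa using prob_le_one))
    hK hCK hu (by positivity) (sum_Ioc_measure_le hξmeas) antitone_measure_lt
  obtain ⟨N₀, hN₀⟩ := eventually_atTop.1 hconv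
  set u : ℕ → ℝ := fun n => (μ {w | n ∈ renewalSet ξ w}).toReal
  refine ⟨C₁ + ∑ n ∈ range N₀, (u n)⁻¹, by positivity,
    fun N hN2 huN F hFm hF0 ⟨B, hB⟩ ⟨G, hG⟩ => ?_⟩
  have hF : Integrable F μ := .of_bound hFm.aestronglyMeasurable B
    (ae_of_all _ fun w => by rw [Real.norm_of_nonneg (hF0 w)]; exact hB w)
  obtain ⟨c, hcC, hc⟩ : ∃ c ≤ C₁ + ∑ n ∈ range N₀, (u n)⁻¹,
      ∫ w in {w | N ∈ renewalSet ξ w}, F w ∂μ ≤ c * u N * ∫ w, F w ∂μ := by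
    rcases le_or_gt N₀ N with hN | hN
    · exact ⟨C₁, le_add_of_nonneg_right (by positivity), setIntegral_setOf_mem_renewalSet_le
        hξpos hξmeas hξindep hξid (by omega) (by positivity) (hN₀ N hN) hF0 hF hG⟩
    · refine ⟨(u N)⁻¹, (single_le_sum (f := fun n => (u n)⁻¹) (fun n _ => by positivity)
        (mem_range.2 hN)).trans (le_add_of_nonneg_left hC₁.le), ?_⟩
      rw [inv_mul_cancel₀ huN.ne', one_mul]
      exact setIntegral_le_integral hF (ae_of_all _ hF0)
  rw [div_le_iff₀ huN, mul_right_comm]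
  exact hc.trans (by gcongr; exact integral_nonneg hF0)
end
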